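/- arXiv:1507.05030 — 5 statements merged into one kernel-verified Lean document; each statement's English description precedes it below -/
import Mathlib

section
/- Let U ⊆ ℝⁿ be open, u ∈ C²(U) with u > 0, and w = log u. Define Qw = Δw − D²w(Dw,Dw)/(1+|Dw|²) + |Dw|². Then div(u Du / √(u² + |Du|²)) ≥ 0 on U if and only if Qw ≥ 0 on U. -/
set_option maxHeartbeats 1000000


open Real Set

/-- Partial derivative of `f` in the `i`-th coordinate direction. -/
noncomputable def pd {n : ℕ} (f : EuclideanSpace ℝ (Fin n) → ℝ) (i : Fin n)
    (x : EuclideanSpace ℝ (Fin n)) : ℝ :=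
  fderiv ℝ f x (EuclideanSpace.single i 1)

/-- Squared norm of the gradient of `f` at `x`. -/
noncomputable def gradNormSq {n : ℕ} (f : EuclideanSpace ℝ (Fin n) → ℝ)
    (x : EuclideanSpace ℝ (Fin n)) : ℝ :=
  ∑ i, (pd f i x) ^ 2

/-- The divergence of the relativistic heat flux `u Du / √(u² + |Du|²)`. -/
noncomputable def relDiv {n : ℕ} (u : EuclideanSpace ℝ (Fin n) → ℝ)
    (x : EuclideanSpace ℝ (Fin n)) : ℝ :=
  ∑ i, pd (fun y => u y * pd u i y / Real.sqrt ((u y) ^ 2 + gradNormSq u y)) i x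

/-- The transformed quasilinear operator
`Q w = Δw − D²w(Dw,Dw)/(1+|Dw|²) + |Dw|²`. -/
noncomputable def Qop {n : ℕ} (w : EuclideanSpace ℝ (Fin n) → ℝ)
    (x : EuclideanSpace ℝ (Fin n)) : ℝ :=
  (∑ i, pd (pd w i) i x)
    - (∑ i, ∑ j, pd (pd w i) j x * pd w i x * pd w j x) / (1 + gradNormSq w x)
    + gradNormSq w x

lemma key_identity {n : ℕ} (U : Set (EuclideanSpace ℝ (Fin n)))
    (hU : IsOpen U) (u w : EuclideanSpace ℝ (Fin n) → ℝ)
    (hu : ContDiffOn ℝ 2 u U) (hupos : ∀ x ∈ U, 0 < u x)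
    (hw : ∀ x ∈ U, w x = Real.log (u x)) {x : EuclideanSpace ℝ (Fin n)} (hx : x ∈ U) :
    relDiv u x * Real.sqrt ((u x) ^ 2 + gradNormSq u x) = (u x) ^ 2 * Qop w x := by
  have ha : 0 < u x := hupos x hx
  have hud : ∀ y ∈ U, DifferentiableAt ℝ u y := fun y hy =>
    (hu.contDiffAt (hU.mem_nhds hy)).differentiableAt (by norm_num)
  have hu2 : ContDiffAt ℝ 2 u x := hu.contDiffAt (hU.mem_nhds hx)
  have hud' : HasFDerivAt u (fderiv ℝ u x) x := (hud x hx).hasFDerivAt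
  -- second derivative data
  have hDpd : ∀ i : Fin n, DifferentiableAt ℝ (pd u i) x := by
    intro i
    have h1 : ContDiffAt ℝ 1 (fderiv ℝ u) x := hu2.fderiv_right (by norm_num)
    exact (h1.differentiableAt one_ne_zero).clm_apply (differentiableAt_const _)
  have hpd' : ∀ i : Fin n, HasFDerivAt (pd u i) (fderiv ℝ (pd u i) x) x :=
    fun i => (hDpd i).hasFDerivAt
  set G : Fin n → ℝ := fun i => pd u i x with hGdef
  set Hm : Fin n → Fin n → ℝ := fun i j => pd (pd u i) j x with hHdef
  have hGe : ∀ j, fderiv ℝ u x (EuclideanSpace.single j 1) = G j := fun j => rfl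
  have hHe : ∀ k j, fderiv ℝ (pd u k) x (EuclideanSpace.single j 1) = Hm k j :=
    fun _ _ => rfl
  set S : ℝ := gradNormSq u x with hSdef
  have hSsum : S = ∑ i, (G i) ^ 2 := rfl
  have hS0 : 0 ≤ S := by rw [hSsum]; exact Finset.sum_nonneg fun i _ => sq_nonneg _
  have hqpos : 0 < (u x) ^ 2 + S := by positivity
  set r : ℝ := Real.sqrt ((u x) ^ 2 + gradNormSq u x) with hrdef
  have hr : 0 < r := Real.sqrt_pos.mpr hqpos
  have hr2 : r ^ 2 = (u x) ^ 2 + S := Real.sq_sqrt hqpos.le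
  -- derivative of gradNormSq u
  have hgrad : HasFDerivAt (gradNormSq u)
      (∑ k, ((G k) • fderiv ℝ (pd u k) x + (G k) • fderiv ℝ (pd u k) x)) x := by
    have h1 : HasFDerivAt (fun y => ∑ k, (pd u k y) ^ 2)
        (∑ k, ((G k) • fderiv ℝ (pd u k) x + (G k) • fderiv ℝ (pd u k) x)) x := by
      apply HasFDerivAt.fun_sum
      intro k _
      simpa only [← pow_two] using (hpd' k).fun_mul (hpd' k)
    exact h1
  -- derivative of q = u² + gradNormSq u
  have hq : HasFDerivAt (fun y => (u y) ^ 2 + gradNormSq u y)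
      ((u x • fderiv ℝ u x + u x • fderiv ℝ u x)
        + ∑ k, ((G k) • fderiv ℝ (pd u k) x + (G k) • fderiv ℝ (pd u k) x)) x := by
    have h1 : HasFDerivAt (fun y => (u y) ^ 2) (u x • fderiv ℝ u x + u x • fderiv ℝ u x) x := by
      simpa only [← pow_two] using hud'.fun_mul hud'
    exact h1.add hgrad
  have hsqrt : HasFDerivAt (fun y => Real.sqrt ((u y) ^ 2 + gradNormSq u y))
      ((1 / (2 * r)) • ((u x • fderiv ℝ u x + u x • fderiv ℝ u x)
        + ∑ k, ((G k) • fderiv ℝ (pd u k) x + (G k) • fderiv ℝ (pd u k) x))) x := by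
    have := hq.sqrt hqpos.ne'
    exact this
  have hinv : HasFDerivAt (fun y => (Real.sqrt ((u y) ^ 2 + gradNormSq u y))⁻¹)
      ((-(r ^ 2)⁻¹) • ((1 / (2 * r)) • ((u x • fderiv ℝ u x + u x • fderiv ℝ u x)
        + ∑ k, ((G k) • fderiv ℝ (pd u k) x + (G k) • fderiv ℝ (pd u k) x)))) x := by
    have := (hasDerivAt_inv hr.ne').comp_hasFDerivAt x hsqrt
    simpa [Function.comp_def] using this
  -- derivative of each flux component
  have hFi : ∀ i : Fin n, HasFDerivAt
      (fun y => u y * pd u i y / Real.sqrt ((u y) ^ 2 + gradNormSq u y))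
      ((u x * pd u i x) • ((-(r ^ 2)⁻¹) • ((1 / (2 * r)) •
          ((u x • fderiv ℝ u x + u x • fderiv ℝ u x)
          + ∑ k, ((G k) • fderiv ℝ (pd u k) x + (G k) • fderiv ℝ (pd u k) x))))
        + r⁻¹ • (u x • fderiv ℝ (pd u i) x + pd u i x • fderiv ℝ u x)) x := by
    intro i
    have hnum : HasFDerivAt (fun y => u y * pd u i y)
        (u x • fderiv ℝ (pd u i) x + pd u i x • fderiv ℝ u x) x := hud'.mul (hpd' i)
    have := hnum.fun_mul hinv
    simpa only [div_eq_mul_inv] using this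
  -- value of each flux derivative
  have hFval : ∀ i : Fin n,
      pd (fun y => u y * pd u i y / Real.sqrt ((u y) ^ 2 + gradNormSq u y)) i x * (r * r ^ 2)
        = r ^ 2 * (u x * Hm i i + G i * G i)
          - (u x * G i) * (u x * G i + ∑ k, G k * Hm k i) := by
    intro i
    rw [pd, (hFi i).fderiv]
    simp only [ContinuousLinearMap.add_apply, ContinuousLinearMap.smul_apply,
      ContinuousLinearMap.coe_sum', Finset.sum_apply, ContinuousLinearMap.sum_apply,
      smul_eq_mul, hGe, hHe]
    rw [show (∑ k, (G k * Hm k i + G k * Hm k i)) = 2 * ∑ k, G k * Hm k i from by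
      rw [Finset.mul_sum]; exact Finset.sum_congr rfl fun k _ => (two_mul _).symm]
    field_simp
    ring
  -- sum identity for P
  set T : ℝ := ∑ i, Hm i i with hTdef
  set P : ℝ := ∑ i, ∑ j, Hm i j * G i * G j with hPdef
  have hPcomm : (∑ i, ∑ k, Hm k i * G k * G i) = P := Finset.sum_comm
  have hB : (∑ i, (u x * G i) * (u x * G i + ∑ k, G k * Hm k i))
      = (u x) ^ 2 * S + u x * P := by
    have hterm : ∀ i : Fin n, (u x * G i) * (u x * G i + ∑ k, G k * Hm k i)
        = (u x) ^ 2 * (G i) ^ 2 + u x * ∑ k, Hm k i * G k * G i := by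
      intro i
      rw [mul_add, Finset.mul_sum, Finset.mul_sum]
      congr 1
      · ring
      · exact Finset.sum_congr rfl fun k _ => by ring
    rw [Finset.sum_congr rfl fun i _ => hterm i, Finset.sum_add_distrib,
      ← Finset.mul_sum, ← Finset.mul_sum, hPcomm, ← hSsum]
  have hA : (∑ i, (r ^ 2 * (u x * Hm i i + G i * G i)))
      = r ^ 2 * (u x * T + S) := by
    rw [← Finset.mul_sum, Finset.sum_add_distrib, ← Finset.mul_sum]
    congr 2
    rw [hSsum]
    exact Finset.sum_congr rfl fun i _ => (sq (G i)).symm ▸ by ring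
  have h3 : relDiv u x * (r * r ^ 2)
      = r ^ 2 * (u x * T + S) - ((u x) ^ 2 * S + u x * P) := by
    have : relDiv u x * (r * r ^ 2)
        = ∑ i, pd (fun y => u y * pd u i y / Real.sqrt ((u y) ^ 2 + gradNormSq u y)) i x
            * (r * r ^ 2) := by
      rw [relDiv, Finset.sum_mul]
    rw [this, Finset.sum_congr rfl fun i _ => hFval i, Finset.sum_sub_distrib, hA, hB]
  have h4 : relDiv u x * r
      = (r ^ 2 * (u x * T + S) - ((u x) ^ 2 * S + u x * P)) / r ^ 2 := by
    rw [eq_div_iff (pow_ne_zero 2 hr.ne')]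
    linear_combination h3
  -- now the w side
  have hpw : ∀ y ∈ U, ∀ i, pd w i y = pd u i y / u y := by
    intro y hy i
    have h1 : HasFDerivAt u (fderiv ℝ u y) y := (hud y hy).hasFDerivAt
    have h2 := h1.log (hupos y hy).ne'
    have h3 : HasFDerivAt w ((u y)⁻¹ • fderiv ℝ u y) y :=
      h2.congr_of_eventuallyEq <|
        Filter.eventuallyEq_of_mem (hU.mem_nhds hy) fun z hz => hw z hz
    rw [pd, h3.fderiv]
    simp [div_eq_inv_mul, pd]
  have hpwx : ∀ i, pd w i x = G i / u x := fun i => hpw x hx i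
  have hinvu : HasFDerivAt (fun y => (u y)⁻¹) ((-((u x) ^ 2)⁻¹) • fderiv ℝ u x) x := by
    have := (hasDerivAt_inv ha.ne').comp_hasFDerivAt x hud'
    simpa [Function.comp_def] using this
  have hW : ∀ i j : Fin n, pd (pd w i) j x
      = G i * (-((u x) ^ 2)⁻¹ * G j) + (u x)⁻¹ * Hm i j := by
    intro i j
    have hev : pd w i =ᶠ[nhds x] fun y => pd u i y / u y :=
      Filter.eventuallyEq_of_mem (hU.mem_nhds hx) fun y hy => hpw y hy i
    have hdiv : HasFDerivAt (fun y => pd u i y / u y)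
        (pd u i x • ((-((u x) ^ 2)⁻¹) • fderiv ℝ u x) + (u x)⁻¹ • fderiv ℝ (pd u i) x) x := by
      have := (hpd' i).fun_mul hinvu
      simpa only [div_eq_mul_inv] using this
    rw [pd, hev.fderiv_eq, hdiv.fderiv]
    simp only [ContinuousLinearMap.add_apply, ContinuousLinearMap.smul_apply,
      smul_eq_mul, hGe, hHe]
    rfl
  have hgw : gradNormSq w x = S / (u x) ^ 2 := by
    rw [gradNormSq]
    rw [Finset.sum_congr rfl fun i _ => by rw [hpwx i]]
    rw [hSsum, Finset.sum_div]
    exact Finset.sum_congr rfl fun i _ => by rw [div_pow]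
  have hdiag : (∑ i, pd (pd w i) i x) = (-((u x) ^ 2)⁻¹) * S + (u x)⁻¹ * T := by
    have e1 : (∑ i, G i * (-((u x) ^ 2)⁻¹ * G i)) = (-((u x) ^ 2)⁻¹) * S := by
      rw [hSsum, Finset.mul_sum]
      exact Finset.sum_congr rfl fun i _ => by ring
    have e2 : (∑ i, (u x)⁻¹ * Hm i i) = (u x)⁻¹ * T := by
      rw [hTdef, Finset.mul_sum]
    rw [Finset.sum_congr rfl fun i _ => hW i i, Finset.sum_add_distrib, e1, e2]
  have hdouble : (∑ i, ∑ j, pd (pd w i) j x * pd w i x * pd w j x)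
      = (u x)⁻¹ ^ 3 * P - ((u x)⁻¹ ^ 4) * (S * S) := by
    have hterm : ∀ i j : Fin n, pd (pd w i) j x * pd w i x * pd w j x
        = (u x)⁻¹ ^ 3 * (Hm i j * G i * G j) - ((u x)⁻¹ ^ 4) * ((G i) ^ 2 * (G j) ^ 2) := by
      intro i j
      rw [hW i j, hpwx i, hpwx j]
      have hsq : ((u x) ^ 2)⁻¹ = (u x)⁻¹ * (u x)⁻¹ := by rw [sq, mul_inv]
      rw [hsq, div_eq_mul_inv, div_eq_mul_inv]
      ring
    rw [Finset.sum_congr rfl fun i _ => Finset.sum_congr rfl fun j _ => hterm i j]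
    have h1 : ∀ i : Fin n, (∑ j, ((u x)⁻¹ ^ 3 * (Hm i j * G i * G j)
        - ((u x)⁻¹ ^ 4) * ((G i) ^ 2 * (G j) ^ 2)))
        = (u x)⁻¹ ^ 3 * (∑ j, Hm i j * G i * G j)
          - ((u x)⁻¹ ^ 4) * ((G i) ^ 2 * ∑ j, (G j) ^ 2) := by
      intro i
      rw [Finset.sum_sub_distrib, ← Finset.mul_sum, ← Finset.mul_sum, ← Finset.mul_sum]
    rw [Finset.sum_congr rfl fun i _ => h1 i, Finset.sum_sub_distrib,
      ← Finset.mul_sum, ← Finset.mul_sum, ← Finset.sum_mul, hPdef, hSsum]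
  -- final assembly
  rw [Qop, hdiag, hdouble, hgw]
  rw [h4, hr2]
  have hane : u x ≠ 0 := ha.ne'
  have hqne : (u x) ^ 2 + S ≠ 0 := hqpos.ne'
  have hone : 1 + S / (u x) ^ 2 = ((u x) ^ 2 + S) / (u x) ^ 2 := by field_simp
  rw [hone, div_div_eq_mul_div]
  field_simp
  ring

/-- `u` is relativistically subharmonic iff `Q w ≥ 0`, `w = log u`. -/
theorem stmt2 {n : ℕ} (U : Set (EuclideanSpace ℝ (Fin n)))
    (hU : IsOpen U) (u w : EuclideanSpace ℝ (Fin n) → ℝ)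
    (hu : ContDiffOn ℝ 2 u U) (hupos : ∀ x ∈ U, 0 < u x)
    (hw : ∀ x ∈ U, w x = Real.log (u x)) :
    (∀ x ∈ U, 0 ≤ relDiv u x) ↔ (∀ x ∈ U, 0 ≤ Qop w x) := by
  constructor
  · intro h x hx
    have hk := key_identity U hU u w hu hupos hw hx
    have ha : 0 < u x := hupos x hx
    have hS0 : 0 ≤ gradNormSq u x := Finset.sum_nonneg fun i _ => sq_nonneg _
    have hr : 0 < Real.sqrt ((u x) ^ 2 + gradNormSq u x) :=
      Real.sqrt_pos.mpr (by positivity)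
    nlinarith [mul_nonneg (h x hx) hr.le, pow_pos ha 2]
  · intro h x hx
    have hk := key_identity U hU u w hu hupos hw hx
    have ha : 0 < u x := hupos x hx
    have hS0 : 0 ≤ gradNormSq u x := Finset.sum_nonneg fun i _ => sq_nonneg _
    have hr : 0 < Real.sqrt ((u x) ^ 2 + gradNormSq u x) :=
      Real.sqrt_pos.mpr (by positivity)
    nlinarith [mul_nonneg (pow_nonneg ha.le 2) (h x hx), hr]
end

section
/- Let U ⊆ ℝⁿ be open, u ∈ C²(U) with u > 0, and w = log u. Then div(u Du / √(u² + |Du|²)) = 0 on U if and only if Qw = 0 on U, where Qw = Δw − D²w(Dw,Dw)/(1+|Dw|²) + |Dw|². -/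
open Real Set

/-- `u` is relativistically harmonic iff `Q w = 0`, `w = log u`. -/
theorem stmt3 {n : ℕ} (U : Set (EuclideanSpace ℝ (Fin n)))
    (hU : IsOpen U) (u w : EuclideanSpace ℝ (Fin n) → ℝ)
    (hu : ContDiffOn ℝ 2 u U) (hupos : ∀ x ∈ U, 0 < u x)
    (hw : ∀ x ∈ U, w x = Real.log (u x)) :
    (∀ x ∈ U, relDiv u x = 0) ↔ (∀ x ∈ U, Qop w x = 0) := by
  have hgnn : ∀ x, 0 ≤ gradNormSq u x := fun x =>
    Finset.sum_nonneg fun i _ => sq_nonneg _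
  have hpos : ∀ x ∈ U, 0 < Real.sqrt ((u x) ^ 2 + gradNormSq u x) := by
    intro x hx
    exact Real.sqrt_pos.mpr (add_pos_of_pos_of_nonneg (pow_pos (hupos x hx) 2) (hgnn x))
  suffices key : ∀ x ∈ U, relDiv u x
      = (u x) ^ 2 / Real.sqrt ((u x) ^ 2 + gradNormSq u x) * Qop w x by
    constructor
    · intro H x hx
      have h := key x hx
      rw [H x hx] at h
      have hc : (u x) ^ 2 / Real.sqrt ((u x) ^ 2 + gradNormSq u x) ≠ 0 :=
        div_ne_zero (pow_ne_zero _ (hupos x hx).ne') (hpos x hx).ne'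
      exact ((mul_eq_zero.mp h.symm).resolve_left hc)
    · intro H x hx
      rw [key x hx, H x hx, mul_zero]
  intro x hx
  -- basic differentiability facts
  have h2 : ∀ y ∈ U, ContDiffAt ℝ 2 u y := fun y hy => hu.contDiffAt (hU.mem_nhds hy)
  have hdu : ∀ y ∈ U, DifferentiableAt ℝ u y := fun y hy =>
    (h2 y hy).differentiableAt two_ne_zero
  have hpdc : ∀ (j : Fin n), ∀ y ∈ U, DifferentiableAt ℝ (pd u j) y := by
    intro j y hy
    have h1 : ContDiffAt ℝ 1 (fderiv ℝ u) y := (h2 y hy).fderiv_right (by norm_num)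
    exact (h1.clm_apply contDiffAt_const).differentiableAt one_ne_zero
  -- abbreviations
  set a : ℝ := u x with ha
  have hua : 0 < a := hupos x hx
  set g : Fin n → ℝ := fun j => pd u j x with hgdef
  set K : Fin n → Fin n → ℝ := fun i j => pd (pd u i) j x with hKdef
  set G : ℝ := ∑ j, g j ^ 2 with hGdef
  have hGnn : 0 ≤ G := Finset.sum_nonneg fun i _ => sq_nonneg _
  have haG : 0 < a ^ 2 + G := add_pos_of_pos_of_nonneg (pow_pos hua 2) hGnn
  set S : ℝ := Real.sqrt (a ^ 2 + G) with hSdef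
  have hSpos : 0 < S := Real.sqrt_pos.mpr haG
  have hSne : S ≠ 0 := hSpos.ne'
  have hS2 : S ^ 2 = a ^ 2 + G := Real.sq_sqrt haG.le
  have hGx : gradNormSq u x = G := rfl
  -- fderiv objects
  have hL : HasFDerivAt u (fderiv ℝ u x) x := (hdu x hx).hasFDerivAt
  have hM : ∀ j, HasFDerivAt (pd u j) (fderiv ℝ (pd u j) x) x :=
    fun j => (hpdc j x hx).hasFDerivAt
  have hLapp : ∀ j, fderiv ℝ u x (EuclideanSpace.single j 1) = g j := fun j => rfl
  have hMapp : ∀ j i, fderiv ℝ (pd u j) x (EuclideanSpace.single i 1) = K j i :=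
    fun j i => rfl
  -- first derivatives of w on U
  have hwj : ∀ y ∈ U, ∀ j, pd w j y = pd u j y / u y := by
    intro y hy j
    have hevw : w =ᶠ[nhds y] fun z => Real.log (u z) :=
      Filter.eventuallyEq_of_mem (hU.mem_nhds hy) hw
    have hlog : HasFDerivAt (fun z => Real.log (u z))
        ((u y)⁻¹ • fderiv ℝ u y) y :=
      (Real.hasDerivAt_log (hupos y hy).ne').comp_hasFDerivAt y (hdu y hy).hasFDerivAt
    rw [pd, hevw.fderiv_eq, hlog.fderiv]
    simp [pd, div_eq_inv_mul]
  -- second derivatives of w at x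
  have hww : ∀ i j, pd (pd w i) j x = (K i j * a - g i * g j) / a ^ 2 := by
    intro i j
    have hev : pd w i =ᶠ[nhds x] fun y => pd u i y * (u y)⁻¹ :=
      Filter.eventuallyEq_of_mem (hU.mem_nhds hx) (fun y hy => by
        rw [hwj y hy i, div_eq_mul_inv])
    have hinv : HasFDerivAt (fun y => (u y)⁻¹)
        ((-(a ^ 2)⁻¹) • fderiv ℝ u x) x :=
      (hasDerivAt_inv hua.ne').comp_hasFDerivAt x hL
    have hq : HasFDerivAt (fun y => pd u i y * (u y)⁻¹)
        (pd u i x • ((-(a ^ 2)⁻¹) • fderiv ℝ u x) + (u x)⁻¹ • fderiv ℝ (pd u i) x) x :=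
      (hM i).mul hinv
    rw [pd, hev.fderiv_eq, hq.fderiv]
    simp only [ContinuousLinearMap.add_apply, ContinuousLinearMap.smul_apply,
      smul_eq_mul, hLapp, hMapp]
    show g i * (-(a ^ 2)⁻¹ * g j) + a⁻¹ * K i j = (K i j * a - g i * g j) / a ^ 2
    field_simp
    ring
  -- gradNormSq of w at x
  have hgw : gradNormSq w x = G / a ^ 2 := by
    rw [gradNormSq, hGdef, Finset.sum_div]
    exact Finset.sum_congr rfl fun j _ => by rw [hwj x hx j, div_pow]
  -- derivative of the argument of the square root
  have hA : HasFDerivAt (fun y => (u y) ^ 2 + gradNormSq u y)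
      (((2 : ℕ) * a ^ 1) • fderiv ℝ u x
        + ∑ j, ((2 : ℕ) * g j ^ 1) • fderiv ℝ (pd u j) x) x := by
    have h1 : HasFDerivAt (fun y => (u y) ^ 2) (((2 : ℕ) * a ^ 1) • fderiv ℝ u x) x :=
      (hasDerivAt_pow 2 a).comp_hasFDerivAt x hL
    have h2' : HasFDerivAt (fun y => ∑ j, (pd u j y) ^ 2)
        (∑ j, ((2 : ℕ) * g j ^ 1) • fderiv ℝ (pd u j) x) x :=
      HasFDerivAt.fun_sum fun j _ => by exact (hasDerivAt_pow 2 (g j)).comp_hasFDerivAt x (hM j)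
    exact h1.add h2'
  have hAx : (u x) ^ 2 + gradNormSq u x = a ^ 2 + G := rfl
  -- derivative of the square root of that
  have hsq : HasFDerivAt (fun y => Real.sqrt ((u y) ^ 2 + gradNormSq u y))
      ((1 / (2 * S)) • (((2 : ℕ) * a ^ 1) • fderiv ℝ u x
        + ∑ j, ((2 : ℕ) * g j ^ 1) • fderiv ℝ (pd u j) x)) x := by
    have := (Real.hasDerivAt_sqrt (x := a ^ 2 + G) haG.ne').comp_hasFDerivAt x hA
    exact this
  -- derivative of the inverse of the square root
  have hinvS : HasFDerivAt (fun y => (Real.sqrt ((u y) ^ 2 + gradNormSq u y))⁻¹)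
      ((-(S ^ 2)⁻¹) • ((1 / (2 * S)) • (((2 : ℕ) * a ^ 1) • fderiv ℝ u x
        + ∑ j, ((2 : ℕ) * g j ^ 1) • fderiv ℝ (pd u j) x))) x :=
    (hasDerivAt_inv hSne).comp_hasFDerivAt x hsq
  -- the key per-term computation for relDiv
  have hterm : ∀ i, pd (fun y => u y * pd u i y / Real.sqrt ((u y) ^ 2 + gradNormSq u y)) i x
      * S ^ 3
      = (a ^ 2 + G) * (a * K i i + g i * g i)
        - a * g i * (a * g i + ∑ j, g j * K j i) := by
    intro i
    have hnum : HasFDerivAt (fun y => u y * pd u i y)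
        (a • fderiv ℝ (pd u i) x + g i • fderiv ℝ u x) x := hL.mul (hM i)
    have hprod : HasFDerivAt
        (fun y => (u y * pd u i y) * (Real.sqrt ((u y) ^ 2 + gradNormSq u y))⁻¹)
        ((a * g i) • ((-(S ^ 2)⁻¹) • ((1 / (2 * S)) • (((2 : ℕ) * a ^ 1) • fderiv ℝ u x
            + ∑ j, ((2 : ℕ) * g j ^ 1) • fderiv ℝ (pd u j) x)))
          + S⁻¹ • (a • fderiv ℝ (pd u i) x + g i • fderiv ℝ u x)) x :=
      hnum.mul hinvS
    have hfun : (fun y => u y * pd u i y / Real.sqrt ((u y) ^ 2 + gradNormSq u y))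
        = fun y => (u y * pd u i y) * (Real.sqrt ((u y) ^ 2 + gradNormSq u y))⁻¹ := by
      funext y; rw [div_eq_mul_inv]
    rw [pd, hfun, hprod.fderiv]
    simp only [ContinuousLinearMap.add_apply, ContinuousLinearMap.smul_apply,
      ContinuousLinearMap.coe_sum', Finset.sum_apply, smul_eq_mul, hLapp, hMapp,
      pow_one, Nat.cast_ofNat]
    have hsum : ∑ j, 2 * g j * K j i = 2 * ∑ j, g j * K j i := by
      rw [Finset.mul_sum]; exact Finset.sum_congr rfl fun j _ => by ring
    rw [hsum, ← hS2]
    field_simp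
    ring
  -- sum relabeling
  set T : ℝ := ∑ i, ∑ j, K i j * g i * g j with hTdef
  have hswap : ∑ i, ∑ j, g i * (g j * K j i) = T := by
    rw [Finset.sum_comm, hTdef]
    exact Finset.sum_congr rfl fun i _ => Finset.sum_congr rfl fun j _ => by ring
  set Δ : ℝ := ∑ i, K i i with hΔdef
  set R : ℝ := (a ^ 2 + G) * (a * Δ) + G * G - a * T with hRdef
  -- relDiv identity
  have h1 : relDiv u x * S ^ 3 = R := by
    rw [relDiv, Finset.sum_mul]
    rw [Finset.sum_congr rfl fun i _ => hterm i]
    have : ∀ i : Fin n, (a ^ 2 + G) * (a * K i i + g i * g i)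
        - a * g i * (a * g i + ∑ j, g j * K j i)
        = (a ^ 2 + G) * (a * K i i) + G * (g i * g i)
          - a * ∑ j, g i * (g j * K j i) := by
      intro i
      rw [← Finset.mul_sum]
      ring
    rw [Finset.sum_congr rfl fun i _ => this i]
    have hGG : ∑ i, g i * g i = G := by
      rw [hGdef]; exact Finset.sum_congr rfl fun i _ => (sq (g i)).symm
    have p1 : ∑ i, (a ^ 2 + G) * (a * K i i) = (a ^ 2 + G) * (a * Δ) := by
      rw [hΔdef, Finset.mul_sum, Finset.mul_sum]
    have p2 : ∑ i, G * (g i * g i) = G * G := by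
      rw [← Finset.mul_sum, hGG]
    have p3 : ∑ i, a * ∑ j, g i * (g j * K j i) = a * T := by
      rw [← Finset.mul_sum, hswap]
    rw [Finset.sum_sub_distrib, Finset.sum_add_distrib, p1, p2, p3, hRdef]
  -- Qop pieces
  have hGG : ∑ i, g i * g i = G := by
    rw [hGdef]; exact Finset.sum_congr rfl fun i _ => (sq (g i)).symm
  have hΔw : ∑ i, pd (pd w i) i x = (a * Δ - G) / a ^ 2 := by
    rw [Finset.sum_congr rfl fun i _ => hww i i, ← Finset.sum_div]
    congr 1
    rw [Finset.sum_sub_distrib, ← Finset.sum_mul, hΔdef, hGG]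
    ring
  have hTw : ∑ i, ∑ j, pd (pd w i) j x * pd w i x * pd w j x
      = (a * T - G * G) / a ^ 4 := by
    have hper : ∀ i j : Fin n, pd (pd w i) j x * pd w i x * pd w j x
        = (K i j * a * (g i * g j) - (g i ^ 2) * (g j ^ 2)) / a ^ 4 := by
      intro i j
      rw [hww i j, hwj x hx i, hwj x hx j]
      show (K i j * a - g i * g j) / a ^ 2 * (g i / a) * (g j / a) = _
      field_simp
    rw [Finset.sum_congr rfl fun i _ => Finset.sum_congr rfl fun j _ => hper i j]
    simp only [← Finset.sum_div]
    congr 1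
    simp only [Finset.sum_sub_distrib]
    have q1 : ∑ i : Fin n, ∑ j : Fin n, K i j * a * (g i * g j) = a * T := by
      rw [hTdef, Finset.mul_sum]
      refine Finset.sum_congr rfl fun i _ => ?_
      rw [Finset.mul_sum]
      exact Finset.sum_congr rfl fun j _ => by ring
    have q2 : ∑ i : Fin n, ∑ j : Fin n, g i ^ 2 * g j ^ 2 = G * G := by
      rw [hGdef, Finset.sum_mul_sum]
    rw [q1, q2]
  have h2q : Qop w x * (a ^ 2 * (a ^ 2 + G)) = R := by
    rw [Qop, hΔw, hTw, hgw, hRdef]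
    have hane : a ≠ 0 := hua.ne'
    have hden : (1 : ℝ) + G / a ^ 2 ≠ 0 := by
      have : (1 : ℝ) + G / a ^ 2 = (a ^ 2 + G) / a ^ 2 := by field_simp
      rw [this]
      exact div_ne_zero haG.ne' (pow_ne_zero _ hane)
    field_simp
    ring
  -- combine
  have hcomb : (a ^ 2 / S * Qop w x) * S ^ 3 = Qop w x * (a ^ 2 * (a ^ 2 + G)) := by
    rw [← hS2]
    field_simp
  have hfin : relDiv u x * S ^ 3 = (a ^ 2 / S * Qop w x) * S ^ 3 := by
    rw [h1, hcomb, h2q]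
  exact mul_right_cancel₀ (pow_ne_zero 3 hSne) hfin
end

section
/- Let u ∈ C²(B(x,r)) with u > 0 satisfy div(u Du/√(u²+|Du|²)) = 0 on the open ball B(x,r) ⊆ ℝⁿ. If Du(y)·(y−x) ≤ 0 for all y ∈ B(x,r), then u is constant on B(x,r). -/
open Real Set

section helpers
variable {n : ℕ}

noncomputable def Wfun (u : EuclideanSpace ℝ (Fin n) → ℝ) (z : EuclideanSpace ℝ (Fin n)) : ℝ :=
  Real.sqrt ((u z) ^ 2 + gradNormSq u z)

noncomputable def Ffun (u : EuclideanSpace ℝ (Fin n) → ℝ) (i : Fin n)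
    (z : EuclideanSpace ℝ (Fin n)) : ℝ :=
  u z * pd u i z / Real.sqrt ((u z) ^ 2 + gradNormSq u z)

lemma relDiv_eq_sum (u : EuclideanSpace ℝ (Fin n) → ℝ) (z : EuclideanSpace ℝ (Fin n)) :
    relDiv u z = ∑ i, pd (Ffun u i) i z := rfl

noncomputable def phiC (x : EuclideanSpace ℝ (Fin n)) (b : ℝ) (z : EuclideanSpace ℝ (Fin n)) : ℝ :=
  max (b ^ 2 - ‖z - x‖ ^ 2) 0 ^ 2

noncomputable def dphiC (x : EuclideanSpace ℝ (Fin n)) (b : ℝ) (z : EuclideanSpace ℝ (Fin n)) :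
    EuclideanSpace ℝ (Fin n) →L[ℝ] ℝ :=
  (2 * max (b ^ 2 - ‖z - x‖ ^ 2) 0) •
    (-(2 • (innerSL ℝ (z - x)).comp (ContinuousLinearMap.id ℝ (EuclideanSpace ℝ (Fin n)))))

noncomputable def Gfun (u : EuclideanSpace ℝ (Fin n) → ℝ) (x : EuclideanSpace ℝ (Fin n))
    (b c : ℝ) (i : Fin n) (z : EuclideanSpace ℝ (Fin n)) : ℝ :=
  if ‖z - x‖ < c then phiC x b z * Ffun u i z else 0

noncomputable def Gder (u : EuclideanSpace ℝ (Fin n) → ℝ) (x : EuclideanSpace ℝ (Fin n))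
    (b c : ℝ) (i : Fin n) (z : EuclideanSpace ℝ (Fin n)) :
    EuclideanSpace ℝ (Fin n) →L[ℝ] ℝ :=
  if ‖z - x‖ < c then phiC x b z • fderiv ℝ (Ffun u i) z + Ffun u i z • dphiC x b z else 0

noncomputable def Dfun (u : EuclideanSpace ℝ (Fin n) → ℝ) (x : EuclideanSpace ℝ (Fin n))
    (b : ℝ) (z : EuclideanSpace ℝ (Fin n)) : ℝ :=
  (2 * max (b ^ 2 - ‖z - x‖ ^ 2) 0) *
    (2 * ((u z / Wfun u z) * ∑ i, pd u i z * (x i - z i)))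

end helpers

lemma cutLemma (s : ℝ) : HasDerivAt (fun s : ℝ => max s 0 ^ 2) (2 * max s 0) s := by
  rcases lt_trichotomy s 0 with h | rfl | h
  · have hev : (fun s : ℝ => max s 0 ^ 2) =ᶠ[nhds s] fun _ => 0 := by
      filter_upwards [Iio_mem_nhds h] with t ht
      rw [mem_Iio] at ht
      simp [max_eq_right ht.le]
    have h0 : HasDerivAt (fun _ : ℝ => (0:ℝ)) (2 * max s 0) s := by
      simpa [max_eq_right h.le] using hasDerivAt_const s (0:ℝ)
    exact h0.congr_of_eventuallyEq hev
  · rw [hasDerivAt_iff_tendsto_slope]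
    have hb : Filter.Tendsto (fun t : ℝ => |t|) (nhdsWithin (0:ℝ) {(0:ℝ)}ᶜ) (nhds 0) :=
      (continuous_abs.tendsto' 0 0 abs_zero).mono_left nhdsWithin_le_nhds
    rw [show (2 * max (0:ℝ) 0) = 0 by simp]
    apply squeeze_zero_norm' _ hb
    filter_upwards [self_mem_nhdsWithin] with t ht
    have ht' : t ≠ 0 := ht
    have hle : max t 0 ^ 2 ≤ t ^ 2 := by
      rcases le_or_gt t 0 with h' | h'
      · simp [max_eq_right h', sq_nonneg]
      · simp [max_eq_left h'.le]
    have habs : |max t 0 ^ 2 / t| ≤ |t| := by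
      rw [abs_div, div_le_iff₀ (abs_pos.2 ht')]
      calc |max t 0 ^ 2| = max t 0 ^2 := abs_of_nonneg (sq_nonneg _)
        _ ≤ t^2 := hle
        _ = |t| * |t| := by rw [abs_mul_abs_self]; ring
    have : slope (fun s : ℝ => max s 0 ^ 2) 0 t = max t 0 ^ 2 / t := by
      simp [slope_def_field, div_eq_inv_mul]
    rw [Real.norm_eq_abs, this]
    exact habs
  · have hev : (fun s : ℝ => max s 0 ^ 2) =ᶠ[nhds s] fun t => t ^ 2 := by
      filter_upwards [Ioi_mem_nhds h] with t ht
      rw [mem_Ioi] at ht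
      simp [max_eq_left ht.le]
    have h0 : HasDerivAt (fun t : ℝ => t ^ 2) (2 * max s 0) s := by
      simpa [max_eq_left h.le, mul_comm] using (hasDerivAt_pow 2 s)
    exact h0.congr_of_eventuallyEq hev

lemma vecDecomp {n : ℕ} (v : EuclideanSpace ℝ (Fin n)) :
    ∑ i, v i • EuclideanSpace.single i (1:ℝ) = v := by
  ext j
  have key : ∀ s : Finset (Fin n), (∑ i ∈ s, v i • EuclideanSpace.single i (1:ℝ)) j
      = ∑ i ∈ s, v i * (EuclideanSpace.single i (1:ℝ)) j := by
    intro s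
    induction s using Finset.induction with
    | empty => rfl
    | insert _ _ h ih =>
      rw [Finset.sum_insert h, Finset.sum_insert h, PiLp.add_apply, PiLp.smul_apply, ih]
      rfl
  rw [key]
  simp [EuclideanSpace.single_apply]

lemma normSq_eq {n : ℕ} (z x : EuclideanSpace ℝ (Fin n)) :
    ‖z - x‖ ^ 2 = ∑ i, (z i - x i) ^ 2 := by
  rw [EuclideanSpace.norm_eq, Real.sq_sqrt (by positivity)]
  refine Finset.sum_congr rfl fun i _ => ?_
  simp [Real.norm_eq_abs, sq_abs, PiLp.sub_apply]

lemma abs_comp_le_norm {n : ℕ} (v : EuclideanSpace ℝ (Fin n)) (i : Fin n) :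
    |v i| ≤ ‖v‖ := by
  rw [EuclideanSpace.norm_eq, ← Real.sqrt_sq_eq_abs]
  apply Real.sqrt_le_sqrt
  exact Finset.single_le_sum (f := fun j => ‖v j‖ ^ 2) (fun j _ => by positivity)
    (Finset.mem_univ i) |>.trans_eq' (by simp [sq_abs])

section reg
variable {n : ℕ} {x : EuclideanSpace ℝ (Fin n)} {r : ℝ} {u : EuclideanSpace ℝ (Fin n) → ℝ}

lemma pd_contDiffAt (hu : ContDiffOn ℝ 2 u (Metric.ball x r))
    {z : EuclideanSpace ℝ (Fin n)} (hz : z ∈ Metric.ball x r) (i : Fin n) :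
    ContDiffAt ℝ 1 (pd u i) z := by
  have hu2 : ContDiffAt ℝ 2 u z := hu.contDiffAt (Metric.isOpen_ball.mem_nhds hz)
  have h1 : ContDiffAt ℝ 1 (fderiv ℝ u) z := hu2.fderiv_right (by norm_num)
  exact h1.clm_apply contDiffAt_const

lemma inner_pos (hupos : ∀ y ∈ Metric.ball x r, 0 < u y)
    {z : EuclideanSpace ℝ (Fin n)} (hz : z ∈ Metric.ball x r) :
    0 < (u z) ^ 2 + gradNormSq u z := by
  have h1 : 0 < (u z) ^ 2 := pow_pos (hupos z hz) 2
  have h2 : 0 ≤ gradNormSq u z := Finset.sum_nonneg fun i _ => sq_nonneg _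
  linarith

lemma W_pos (hupos : ∀ y ∈ Metric.ball x r, 0 < u y)
    {z : EuclideanSpace ℝ (Fin n)} (hz : z ∈ Metric.ball x r) :
    0 < Wfun u z :=
  Real.sqrt_pos.2 (inner_pos hupos hz)

lemma W_contDiffAt (hu : ContDiffOn ℝ 2 u (Metric.ball x r))
    (hupos : ∀ y ∈ Metric.ball x r, 0 < u y)
    {z : EuclideanSpace ℝ (Fin n)} (hz : z ∈ Metric.ball x r) :
    ContDiffAt ℝ 1 (Wfun u) z := by
  have hu1 : ContDiffAt ℝ 1 u z :=
    (hu.contDiffAt (Metric.isOpen_ball.mem_nhds hz)).of_le (by norm_num)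
  have hin : ContDiffAt ℝ 1 (fun z => (u z) ^ 2 + gradNormSq u z) z := by
    refine (hu1.pow 2).add ?_
    exact ContDiffAt.sum fun i _ => (pd_contDiffAt hu hz i).pow 2
  exact (contDiffAt_sqrt (inner_pos hupos hz).ne').comp z hin

lemma F_contDiffAt (hu : ContDiffOn ℝ 2 u (Metric.ball x r))
    (hupos : ∀ y ∈ Metric.ball x r, 0 < u y)
    {z : EuclideanSpace ℝ (Fin n)} (hz : z ∈ Metric.ball x r) (i : Fin n) :
    ContDiffAt ℝ 1 (Ffun u i) z := by
  have hu1 : ContDiffAt ℝ 1 u z :=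
    (hu.contDiffAt (Metric.isOpen_ball.mem_nhds hz)).of_le (by norm_num)
  exact (hu1.mul (pd_contDiffAt hu hz i)).div (W_contDiffAt hu hupos hz)
    (W_pos hupos hz).ne'

end reg

section cutoff
variable {n : ℕ} (x : EuclideanSpace ℝ (Fin n)) (b : ℝ)

lemma phi_hasFDeriv (z : EuclideanSpace ℝ (Fin n)) :
    HasFDerivAt (phiC x b) (dphiC x b z) z := by
  have hS : HasFDerivAt (fun y : EuclideanSpace ℝ (Fin n) => ‖y - x‖ ^ 2)
      (2 • (innerSL ℝ (z - x)).comp (ContinuousLinearMap.id ℝ (EuclideanSpace ℝ (Fin n)))) z :=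
    ((hasFDerivAt_id z).sub_const x).norm_sq
  have hpsi : HasFDerivAt (fun y : EuclideanSpace ℝ (Fin n) => b ^ 2 - ‖y - x‖ ^ 2)
      (-(2 • (innerSL ℝ (z - x)).comp (ContinuousLinearMap.id ℝ (EuclideanSpace ℝ (Fin n))))) z :=
    hS.const_sub _
  exact (cutLemma (b ^ 2 - ‖z - x‖ ^ 2)).comp_hasFDerivAt z hpsi

lemma dphi_apply (z : EuclideanSpace ℝ (Fin n)) (i : Fin n) :
    dphiC x b z (EuclideanSpace.single i 1)
      = (2 * max (b ^ 2 - ‖z - x‖ ^ 2) 0) * (2 * (x i - z i)) := by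
  simp [dphiC, EuclideanSpace.inner_single_right, PiLp.sub_apply, real_inner_comm]
  ring

lemma phi_cont : Continuous (phiC x b) :=
  (((continuous_const.sub ((continuous_id.sub continuous_const).norm.pow 2)).max
    continuous_const).pow 2)

lemma max_eq_zero_far (hb : 0 < b) (z : EuclideanSpace ℝ (Fin n)) (hz : b ≤ ‖z - x‖) :
    max (b ^ 2 - ‖z - x‖ ^ 2) 0 = 0 := by
  have : b ^ 2 ≤ ‖z - x‖ ^ 2 := by nlinarith [norm_nonneg (z - x)]
  exact max_eq_right (by linarith)

lemma phi_zero_far (hb : 0 < b) (z : EuclideanSpace ℝ (Fin n)) (hz : b ≤ ‖z - x‖) :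
    phiC x b z = 0 := by
  rw [phiC, max_eq_zero_far x b hb z hz]; ring

lemma dphi_zero_far (hb : 0 < b) (z : EuclideanSpace ℝ (Fin n)) (hz : b ≤ ‖z - x‖) :
    dphiC x b z = 0 := by
  rw [dphiC, max_eq_zero_far x b hb z hz]
  simp

end cutoff

section Glemmas
variable {n : ℕ} {x : EuclideanSpace ℝ (Fin n)} {r b c : ℝ}
  {u : EuclideanSpace ℝ (Fin n) → ℝ}

lemma mem_ball_of_norm {z : EuclideanSpace ℝ (Fin n)} {t : ℝ} (h : ‖z - x‖ < t) :
    z ∈ Metric.ball x t := by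
  rw [mem_ball_iff_norm]; exact h

lemma isOpen_normlt (t : ℝ) : IsOpen {y : EuclideanSpace ℝ (Fin n) | ‖y - x‖ < t} :=
  isOpen_lt (continuous_norm.comp (continuous_id.sub continuous_const)) continuous_const

lemma isOpen_normgt (t : ℝ) : IsOpen {y : EuclideanSpace ℝ (Fin n) | t < ‖y - x‖} :=
  isOpen_lt continuous_const (continuous_norm.comp (continuous_id.sub continuous_const))

lemma G_zero_far (hb : 0 < b) {z : EuclideanSpace ℝ (Fin n)} (hz : b ≤ ‖z - x‖) (i : Fin n) :
    Gfun u x b c i z = 0 := by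
  rw [Gfun]
  split
  · rw [phi_zero_far x b hb z hz, zero_mul]
  · rfl

lemma G_hasFDeriv (hu : ContDiffOn ℝ 2 u (Metric.ball x r))
    (hupos : ∀ y ∈ Metric.ball x r, 0 < u y) (hb : 0 < b) (hbc : b < c) (hcr : c < r)
    (i : Fin n) (z : EuclideanSpace ℝ (Fin n)) :
    HasFDerivAt (Gfun u x b c i) (Gder u x b c i z) z := by
  by_cases h : ‖z - x‖ < c
  · have hzr : z ∈ Metric.ball x r := mem_ball_of_norm (h.trans hcr)
    have hF : HasFDerivAt (Ffun u i) (fderiv ℝ (Ffun u i) z) z :=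
      ((F_contDiffAt hu hupos hzr i).differentiableAt one_ne_zero).hasFDerivAt
    have hmul : HasFDerivAt (fun y => phiC x b y * Ffun u i y)
        (phiC x b z • fderiv ℝ (Ffun u i) z + Ffun u i z • dphiC x b z) z :=
      (phi_hasFDeriv x b z).mul hF
    have hev : (fun y => phiC x b y * Ffun u i y) =ᶠ[nhds z] Gfun u x b c i := by
      filter_upwards [(isOpen_normlt (x := x) c).mem_nhds h] with y hy
      rw [Gfun, if_pos hy]
    rw [Gder, if_pos h]
    exact hmul.congr_of_eventuallyEq hev.symm
  · have hbz : b < ‖z - x‖ := lt_of_lt_of_le hbc (not_lt.1 h)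
    have hev : (fun _ => (0:ℝ)) =ᶠ[nhds z] Gfun u x b c i := by
      filter_upwards [(isOpen_normgt (x := x) b).mem_nhds hbz] with y hy
      rw [G_zero_far hb (le_of_lt hy)]
    rw [Gder, if_neg h]
    exact (hasFDerivAt_const 0 z).congr_of_eventuallyEq hev.symm

lemma Gder_sum_eq (hu : ContDiffOn ℝ 2 u (Metric.ball x r))
    (hupos : ∀ y ∈ Metric.ball x r, 0 < u y)
    (hharm : ∀ y ∈ Metric.ball x r, relDiv u y = 0)
    (hb : 0 < b) (hbc : b < c) (hcr : c < r) (z : EuclideanSpace ℝ (Fin n)) :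
    ∑ i, Gder u x b c i z (EuclideanSpace.single i 1) = Dfun u x b z := by
  by_cases h : ‖z - x‖ < c
  · have hzr : z ∈ Metric.ball x r := mem_ball_of_norm (h.trans hcr)
    have expand : ∀ i : Fin n, Gder u x b c i z (EuclideanSpace.single i 1)
        = phiC x b z * pd (Ffun u i) i z
          + Ffun u i z * ((2 * max (b ^ 2 - ‖z - x‖ ^ 2) 0) * (2 * (x i - z i))) := by
      intro i
      rw [Gder, if_pos h]
      rw [ContinuousLinearMap.add_apply, ContinuousLinearMap.smul_apply,
        ContinuousLinearMap.smul_apply, smul_eq_mul, smul_eq_mul, dphi_apply]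
      rfl
    rw [Finset.sum_congr rfl fun i _ => expand i, Finset.sum_add_distrib,
      ← Finset.mul_sum, ← relDiv_eq_sum, hharm z hzr, mul_zero, zero_add]
    have hW : Wfun u z ≠ 0 := (W_pos hupos hzr).ne'
    simp only [Wfun] at hW
    simp only [Dfun, Wfun, Finset.mul_sum]
    refine Finset.sum_congr rfl fun i _ => ?_
    simp only [Ffun]
    field_simp
  · have hbz : b ≤ ‖z - x‖ := le_of_lt (lt_of_lt_of_le hbc (not_lt.1 h))
    have lhs0 : ∀ i : Fin n, Gder u x b c i z (EuclideanSpace.single i 1) = 0 := by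
      intro i; rw [Gder, if_neg h]; rfl
    rw [Finset.sum_congr rfl fun i _ => lhs0 i, Finset.sum_const, smul_zero]
    rw [Dfun, max_eq_zero_far x b hb z hbz]
    ring

lemma G_cont (hu : ContDiffOn ℝ 2 u (Metric.ball x r))
    (hupos : ∀ y ∈ Metric.ball x r, 0 < u y) (hb : 0 < b) (hbc : b < c) (hcr : c < r)
    (i : Fin n) : Continuous (Gfun u x b c i) := by
  rw [continuous_iff_continuousAt]
  intro z
  by_cases h : ‖z - x‖ < c
  · have hzr : z ∈ Metric.ball x r := mem_ball_of_norm (h.trans hcr)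
    have hc : ContinuousAt (fun y => phiC x b y * Ffun u i y) z :=
      (phi_cont x b).continuousAt.mul (F_contDiffAt hu hupos hzr i).continuousAt
    apply hc.congr
    filter_upwards [(isOpen_normlt (x := x) c).mem_nhds h] with y hy
    rw [Gfun, if_pos hy]
  · have hbz : b < ‖z - x‖ := lt_of_lt_of_le hbc (not_lt.1 h)
    have h0 : ContinuousAt (fun _ : EuclideanSpace ℝ (Fin n) => (0:ℝ)) z := continuousAt_const
    apply h0.congr
    filter_upwards [(isOpen_normgt (x := x) b).mem_nhds hbz] with y hy
    exact (G_zero_far hb (le_of_lt hy) i).symm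

end Glemmas

section Dlemmas
variable {n : ℕ} {x : EuclideanSpace ℝ (Fin n)} {r b : ℝ}
  {u : EuclideanSpace ℝ (Fin n) → ℝ}

lemma D_nonneg (hupos : ∀ y ∈ Metric.ball x r, 0 < u y)
    (hrad : ∀ y ∈ Metric.ball x r, (∑ i, pd u i y * (y i - x i)) ≤ 0)
    (hb : 0 < b) (hbr : b < r) (z : EuclideanSpace ℝ (Fin n)) :
    0 ≤ Dfun u x b z := by
  by_cases h : ‖z - x‖ < b
  · have hzr : z ∈ Metric.ball x r := mem_ball_of_norm (h.trans hbr)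
    have hsum : 0 ≤ ∑ i, pd u i z * (x i - z i) := by
      have := hrad z hzr
      have hflip : ∑ i, pd u i z * (x i - z i) = -∑ i, pd u i z * (z i - x i) := by
        rw [← Finset.sum_neg_distrib]
        exact Finset.sum_congr rfl fun i _ => by ring
      rw [hflip]
      linarith
    have h1 : 0 ≤ 2 * max (b ^ 2 - ‖z - x‖ ^ 2) 0 := by positivity
    have h2 : 0 ≤ u z / Wfun u z := div_nonneg (hupos z hzr).le (Real.sqrt_nonneg _)
    rw [Dfun]
    have := mul_nonneg h2 hsum
    positivity
  · rw [Dfun, max_eq_zero_far x b hb z (not_lt.1 h)]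
    ring_nf
    exact le_refl 0

lemma D_cont (hu : ContDiffOn ℝ 2 u (Metric.ball x r))
    (hupos : ∀ y ∈ Metric.ball x r, 0 < u y)
    (hb : 0 < b) (hbr : b < r) : Continuous (Dfun u x b) := by
  rw [continuous_iff_continuousAt]
  intro z
  by_cases h : ‖z - x‖ < r
  · have hzr : z ∈ Metric.ball x r := mem_ball_of_norm h
    have hmax : ContinuousAt (fun y : EuclideanSpace ℝ (Fin n)
        => 2 * max (b ^ 2 - ‖y - x‖ ^ 2) 0) z := by
      exact (continuous_const.mul ((continuous_const.sub
        ((continuous_id.sub continuous_const).norm.pow 2)).max continuous_const)).continuousAt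
    have hdiv : ContinuousAt (fun y => u y / Wfun u y) z := by
      have hu1 : ContinuousAt u z :=
        (hu.continuousOn.continuousAt (Metric.isOpen_ball.mem_nhds hzr))
      exact hu1.div (W_contDiffAt hu hupos hzr).continuousAt (W_pos hupos hzr).ne'
    have hsum' : ContinuousAt (fun y => ∑ i, pd u i y * (x i - y i)) z := by
      refine tendsto_finset_sum _ fun i _ => ?_
      refine ContinuousAt.mul (pd_contDiffAt hu hzr i).continuousAt ?_
      have hproj : Continuous (fun y : EuclideanSpace ℝ (Fin n) => y i) :=
        (EuclideanSpace.proj (𝕜 := ℝ) i).continuous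
      exact (continuous_const.sub hproj).continuousAt
    exact hmax.mul (continuous_const.continuousAt.mul (hdiv.mul hsum'))
  · have hbz : b < ‖z - x‖ := lt_of_lt_of_le hbr (not_lt.1 h)
    have h0 : ContinuousAt (fun _ : EuclideanSpace ℝ (Fin n) => (0:ℝ)) z := continuousAt_const
    apply h0.congr
    filter_upwards [(isOpen_normgt (x := x) b).mem_nhds hbz] with y hy
    rw [Dfun, max_eq_zero_far x b hb y (le_of_lt hy)]
    ring

end Dlemmas

lemma rad_zero {n : ℕ} (x : EuclideanSpace ℝ (Fin n)) (r : ℝ) (hr : 0 < r)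
    (u : EuclideanSpace ℝ (Fin n) → ℝ)
    (hu : ContDiffOn ℝ 2 u (Metric.ball x r))
    (hupos : ∀ y ∈ Metric.ball x r, 0 < u y)
    (hharm : ∀ y ∈ Metric.ball x r, relDiv u y = 0)
    (hrad : ∀ y ∈ Metric.ball x r, (∑ i, pd u i y * (y i - x i)) ≤ 0) :
    ∀ z ∈ Metric.ball x r, (∑ i, pd u i z * (z i - x i)) = 0 := by
  intro z₀ hz₀
  cases n with
  | zero => simp
  | succ m =>
    set d : ℝ := ‖z₀ - x‖ with hd
    have hdr : d < r := by rwa [mem_ball_iff_norm] at hz₀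
    have hd0 : 0 ≤ d := norm_nonneg _
    set b : ℝ := d + (r - d) / 3 with hbdef
    set c : ℝ := d + 2 * (r - d) / 3 with hcdef
    have hb0 : 0 < b := by rw [hbdef]; linarith
    have hdb : d < b := by rw [hbdef]; linarith
    have hbc : b < c := by rw [hbdef, hcdef]; linarith
    have hcr : c < r := by rw [hcdef]; linarith
    have hc0 : 0 < c := lt_trans hb0 hbc
    set eL := EuclideanSpace.equiv (Fin (m + 1)) ℝ with heL
    set a : Fin (m + 1) → ℝ := fun i => x i - c with ha
    set bb : Fin (m + 1) → ℝ := fun i => x i + c with hbb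
    have hle : a ≤ bb := fun i => by rw [ha, hbb]; simp; linarith
    have hsingle : ∀ i : Fin (m + 1),
        (eL.symm : (Fin (m + 1) → ℝ) →L[ℝ] EuclideanSpace ℝ (Fin (m + 1))) (Pi.single i 1)
          = EuclideanSpace.single i (1:ℝ) := by
      intro i; rfl
    have pointEq : ∀ y : Fin (m + 1) → ℝ,
        (∑ i, ((Gder u x b c i (eL.symm y)).comp
          (eL.symm : (Fin (m + 1) → ℝ) →L[ℝ] EuclideanSpace ℝ (Fin (m + 1))))
            (Pi.single i 1)) = Dfun u x b (eL.symm y) := by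
      intro y
      rw [← Gder_sum_eq hu hupos hharm hb0 hbc hcr (eL.symm y)]
      refine Finset.sum_congr rfl fun i _ => ?_
      rw [ContinuousLinearMap.comp_apply, hsingle i]
    have hDcont : Continuous (fun y : Fin (m + 1) → ℝ => Dfun u x b (eL.symm y)) :=
      (D_cont hu hupos hb0 (hbc.trans hcr)).comp eL.symm.continuous
    have hDInt : MeasureTheory.IntegrableOn
        (fun y : Fin (m + 1) → ℝ => Dfun u x b (eL.symm y)) (Icc a bb) :=
      hDcont.continuousOn.integrableOn_compact isCompact_Icc
    have key := MeasureTheory.integral_divergence_of_hasFDerivAt_off_countable'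
      a bb hle
      (fun i y => Gfun u x b c i (eL.symm y))
      (fun i y => (Gder u x b c i (eL.symm y)).comp
        (eL.symm : (Fin (m + 1) → ℝ) →L[ℝ] EuclideanSpace ℝ (Fin (m + 1))))
      ∅ countable_empty
      (fun i => ((G_cont hu hupos hb0 hbc hcr i).comp eL.symm.continuous).continuousOn)
      (fun y _ i => (G_hasFDeriv hu hupos hb0 hbc hcr i (eL.symm y)).comp y
        eL.symm.hasFDerivAt)
      (hDInt.congr_fun (fun y _ => (pointEq y).symm) measurableSet_Icc)
    have hfar : ∀ (i : Fin (m + 1)) (t : ℝ), |t - x i| = c →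
        ∀ w : Fin m → ℝ, Gfun u x b c i (eL.symm (Fin.insertNth i t w)) = 0 := by
      intro i t ht w
      apply G_zero_far hb0
      have hins : (eL.symm (Fin.insertNth i t w)) i = t := by
        exact Fin.insertNth_apply_same (α := fun _ => ℝ) i t w
      have hcoord : (eL.symm (Fin.insertNth i t w) - x) i = t - x i := by
        rw [PiLp.sub_apply, hins]
      calc b ≤ c := hbc.le
        _ = |(eL.symm (Fin.insertNth i t w) - x) i| := by rw [hcoord, ht]
        _ ≤ ‖eL.symm (Fin.insertNth i t w) - x‖ := abs_comp_le_norm _ i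
    have hRHS : (∑ i : Fin (m + 1),
        ((∫ w in Icc (a ∘ i.succAbove) (bb ∘ i.succAbove),
            Gfun u x b c i (eL.symm (Fin.insertNth i (bb i) w))) -
          ∫ w in Icc (a ∘ i.succAbove) (bb ∘ i.succAbove),
            Gfun u x b c i (eL.symm (Fin.insertNth i (a i) w)))) = 0 := by
      refine Finset.sum_eq_zero fun i _ => ?_
      have h1 : (∫ w in Icc (a ∘ i.succAbove) (bb ∘ i.succAbove),
          Gfun u x b c i (eL.symm (Fin.insertNth i (bb i) w))) = 0 := by
        apply MeasureTheory.integral_eq_zero_of_ae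
        apply Filter.Eventually.of_forall
        intro w
        exact hfar i (bb i) (by rw [hbb]; simp [abs_of_pos hc0]) w
      have h2 : (∫ w in Icc (a ∘ i.succAbove) (bb ∘ i.succAbove),
          Gfun u x b c i (eL.symm (Fin.insertNth i (a i) w))) = 0 := by
        apply MeasureTheory.integral_eq_zero_of_ae
        apply Filter.Eventually.of_forall
        intro w
        exact hfar i (a i) (by rw [ha]; simp [abs_of_pos hc0]) w
      rw [h1, h2, sub_zero]
    rw [hRHS] at key
    have hDD : (∫ y in Icc a bb, Dfun u x b (eL.symm y)) = 0 := by
      rw [← key]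
      refine MeasureTheory.setIntegral_congr_fun measurableSet_Icc fun y _ => ?_
      show Dfun u x b (eL.symm y) = ∑ i, ((Gder u x b c i (eL.symm y)).comp
        (eL.symm : (Fin (m + 1) → ℝ) →L[ℝ] EuclideanSpace ℝ (Fin (m + 1)))) (Pi.single i 1)
      exact (pointEq y).symm
    have hae : (fun y : Fin (m + 1) → ℝ => Dfun u x b (eL.symm y))
        =ᵐ[MeasureTheory.volume.restrict (Icc a bb)] 0 := by
      refine (MeasureTheory.integral_eq_zero_iff_of_nonneg_ae ?_ hDInt).1 hDD
      exact Filter.Eventually.of_forall fun y =>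
        D_nonneg hupos hrad hb0 (hbc.trans hcr) (eL.symm y)
    have hclos : Icc a bb ⊆ closure (interior (Icc a bb)) := by
      have hlt : ∀ i, a i < bb i := fun i => by rw [ha, hbb]; simp; linarith
      have h1 : interior (Icc a bb) = Set.pi univ fun i => Ioo (a i) (bb i) := by
        rw [← Set.pi_univ_Icc, interior_pi_set finite_univ]
        simp [interior_Icc]
      have h2 : closure (Set.pi univ fun i => Ioo (a i) (bb i)) = Icc a bb := by
        rw [closure_pi_set, ← Set.pi_univ_Icc]
        refine Set.pi_congr rfl fun i _ => closure_Ioo (hlt i).ne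
      rw [h1, h2]
    have heq : EqOn (fun y : Fin (m + 1) → ℝ => Dfun u x b (eL.symm y)) 0 (Icc a bb) :=
      MeasureTheory.Measure.eqOn_of_ae_eq hae hDcont.continuousOn continuousOn_const hclos
    have hmem : eL z₀ ∈ Icc a bb := by
      rw [mem_Icc]
      constructor <;> intro i
      · have := abs_comp_le_norm (z₀ - x) i
        rw [PiLp.sub_apply] at this
        have h2 : |z₀ i - x i| < c := lt_of_le_of_lt this (lt_trans hdb hbc)
        rw [abs_lt] at h2
        show a i ≤ z₀ i
        rw [ha]; simp; linarith [h2.1]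
      · have := abs_comp_le_norm (z₀ - x) i
        rw [PiLp.sub_apply] at this
        have h2 : |z₀ i - x i| < c := lt_of_le_of_lt this (lt_trans hdb hbc)
        rw [abs_lt] at h2
        show z₀ i ≤ bb i
        rw [hbb]; simp; linarith [h2.2]
    have hz₀D : Dfun u x b z₀ = 0 := by
      have := heq hmem
      simpa using this
    have hzr : z₀ ∈ Metric.ball x r := hz₀
    rw [Dfun] at hz₀D
    have hmaxpos : 0 < 2 * max (b ^ 2 - ‖z₀ - x‖ ^ 2) 0 := by
      have : 0 < b ^ 2 - d ^ 2 := by nlinarith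
      rw [← hd, max_eq_left (by nlinarith)]
      linarith
    have huW : 0 < u z₀ / Wfun u z₀ := div_pos (hupos z₀ hzr) (W_pos hupos hzr)
    have hsum0 : (∑ i, pd u i z₀ * (x i - z₀ i)) = 0 := by
      rcases mul_eq_zero.1 hz₀D with h | h
      · exact absurd h hmaxpos.ne'
      · rcases mul_eq_zero.1 h with h' | h'
        · norm_num at h'
        · rcases mul_eq_zero.1 h' with h'' | h''
          · exact absurd h'' huW.ne'
          · exact h''
    have : (∑ i, pd u i z₀ * (z₀ i - x i)) = -∑ i, pd u i z₀ * (x i - z₀ i) := by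
      rw [← Finset.sum_neg_distrib]
      exact Finset.sum_congr rfl fun i _ => by ring
    rw [this, hsum0, neg_zero]


/-- a relativistically harmonic function on a ball whose radial
derivative is nonpositive is constant on the ball. -/
theorem stmt12 {n : ℕ} (x : EuclideanSpace ℝ (Fin n)) (r : ℝ) (hr : 0 < r)
    (u : EuclideanSpace ℝ (Fin n) → ℝ)
    (hu : ContDiffOn ℝ 2 u (Metric.ball x r))
    (hupos : ∀ y ∈ Metric.ball x r, 0 < u y)
    (hharm : ∀ y ∈ Metric.ball x r, relDiv u y = 0)
    (hrad : ∀ y ∈ Metric.ball x r, (∑ i, pd u i y * (y i - x i)) ≤ 0) :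
    ∀ y ∈ Metric.ball x r, u y = u x := by
  intro y hy
  have hrad0 := rad_zero x r hr u hu hupos hharm hrad
  set v : EuclideanSpace ℝ (Fin n) := y - x with hv
  set g : ℝ → ℝ := fun s => u (x + s • v) with hg
  have hmem : ∀ t : ℝ, t ∈ Icc (0:ℝ) 1 → x + t • v ∈ Metric.ball x r := by
    intro t ht
    rw [mem_ball_iff_norm]
    have hnorm : ‖x + t • v - x‖ = |t| * ‖v‖ := by
      rw [add_sub_cancel_left, norm_smul, Real.norm_eq_abs]
    rw [hnorm, abs_of_nonneg ht.1]
    have hvr : ‖v‖ < r := by rw [hv, ← mem_ball_iff_norm]; exact hy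
    calc t * ‖v‖ ≤ 1 * ‖v‖ := mul_le_mul_of_nonneg_right ht.2 (norm_nonneg v)
      _ = ‖v‖ := one_mul _
      _ < r := hvr
  have hkey : ∀ t : ℝ, 0 < t → t ≤ 1 → HasDerivAt g 0 t := by
    intro t ht0 ht1
    have hz : x + t • v ∈ Metric.ball x r := hmem t ⟨ht0.le, ht1⟩
    have hγ : HasDerivAt (fun s : ℝ => x + s • v) v t := by
      simpa using ((hasDerivAt_id t).smul_const v).const_add x
    have hdu : DifferentiableAt ℝ u (x + t • v) :=
      (hu.contDiffAt (Metric.isOpen_ball.mem_nhds hz)).differentiableAt (by norm_num)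
    have hc := hdu.hasFDerivAt.comp_hasDerivAt t hγ
    have hlin : fderiv ℝ u (x + t • v) v = ∑ i, v i * pd u i (x + t • v) := by
      have clm_decomp : ∀ (L : EuclideanSpace ℝ (Fin n) →L[ℝ] ℝ)
          (w : EuclideanSpace ℝ (Fin n)), L w = ∑ i, w i * L (EuclideanSpace.single i 1) := by
        intro L w
        conv_lhs => rw [← vecDecomp w]
        rw [map_sum]
        exact Finset.sum_congr rfl fun i _ => by rw [ContinuousLinearMap.map_smul, smul_eq_mul]
      exact clm_decomp _ v
    have hcoord : ∀ i, (x + t • v) i - x i = t * v i := by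
      intro i
      rw [PiLp.add_apply, PiLp.smul_apply, smul_eq_mul]
      ring
    have h0 := hrad0 (x + t • v) hz
    rw [Finset.sum_congr rfl (fun i _ => by rw [hcoord i])] at h0
    have hsum : (∑ i, v i * pd u i (x + t • v)) = 0 := by
      have hmul : t * ∑ i, v i * pd u i (x + t • v) = 0 := by
        rw [Finset.mul_sum, ← h0]
        exact Finset.sum_congr rfl fun i _ => by ring
      exact (mul_eq_zero.1 hmul).resolve_left ht0.ne'
    have : (0:ℝ) = fderiv ℝ u (x + t • v) v := by rw [hlin, hsum]
    rw [this]
    exact hc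
  have hgcont : ContinuousOn g (Icc 0 1) := by
    refine hu.continuousOn.comp ?_ (fun t ht => hmem t ht)
    exact (continuous_const.add (continuous_id.smul continuous_const)).continuousOn
  have hconst : ∀ s ∈ Ioc (0:ℝ) 1, g s = g 1 := by
    intro s hs
    have h1 := constant_of_has_deriv_right_zero
      (f := g) (a := s) (b := 1)
      (hgcont.mono (Icc_subset_Icc hs.1.le le_rfl))
      (fun t ht => (hkey t (lt_of_lt_of_le hs.1 ht.1) ht.2.le).hasDerivWithinAt)
    exact (h1 1 ⟨hs.2, le_rfl⟩).symm
  haveI hne : (nhdsWithin (0:ℝ) (Ioc 0 1)).NeBot := by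
    apply mem_closure_iff_nhdsWithin_neBot.1
    rw [closure_Ioc (zero_ne_one' ℝ)]
    exact ⟨le_rfl, zero_le_one⟩
  have htend : Filter.Tendsto g (nhdsWithin 0 (Ioc 0 1)) (nhds (g 0)) :=
    (hgcont 0 ⟨le_rfl, zero_le_one⟩).mono Ioc_subset_Icc_self
  have htend2 : Filter.Tendsto g (nhdsWithin 0 (Ioc 0 1)) (nhds (g 1)) := by
    refine Filter.Tendsto.congr' ?_ tendsto_const_nhds
    filter_upwards [self_mem_nhdsWithin] with s hs
    exact (hconst s hs).symm
  have h01 : g 0 = g 1 := tendsto_nhds_unique htend htend2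
  have hg0 : g 0 = u x := by rw [hg]; simp
  have hg1 : g 1 = u y := by rw [hg]; simp [hv]
  rw [← hg1, ← h01, hg0]
end

section
/- Let U ⊆ ℝⁿ be bounded open, T > 0, and let w, w′ ∈ C²,¹(U_T) ∩ C(closure of U_T) satisfy w_t − Q̃w ≤ w′_t − Q̃w′ in U_T, where Q̃v = [Δv − D²v(Dv,Dv)/(1+|Dv|²) + |Dv|²]/√(1+|Dv|²). If w ≤ w′ on the parabolic boundary Γ_T, then w ≤ w′ in U_T. -/
open Real Set

/-- The normalized operator `Q̃ w = Q w / √(1+|Dw|²)`. -/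
noncomputable def Qtil {n : ℕ} (w : EuclideanSpace ℝ (Fin n) → ℝ)
    (x : EuclideanSpace ℝ (Fin n)) : ℝ :=
  Qop w x / Real.sqrt (1 + gradNormSq w x)


/-!
For `ε > 0`, the continuous function `w - w' - ε t` attains its maximum on the compact set
`closure (U × (0, T])`. At a maximum `(x₀, t₀) ∈ U × (0, T]` the one-sided time derivative gives
`w_t - w'_t ≥ ε`, while `D w = D w'` and `D²w ≤ D²w'`; since `Q̃` is degenerate elliptic
(`M(p, p) ≤ |p|² tr M` for `M ≥ 0`), this forces `Q̃ w ≤ Q̃ w'`, contradicting the differential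
inequality. So the maximum lies on `Γ_T`, where it is `≤ 0`, and `w - w' ≤ ε T` for every `ε`.
-/

open Filter Topology InnerProductSpace
open scoped Gradient

lemma deriv_nonneg_of_isMaxOn_Ioc {f : ℝ → ℝ} {a b : ℝ} (hab : a < b)
    (hf : DifferentiableAt ℝ f b) (hmax : IsMaxOn f (Ioc a b) b) : 0 ≤ deriv f b := by
  have hloc : IsLocalMaxOn f (Iic b) b := mem_of_superset (Ioc_mem_nhdsLE hab) hmax
  have hdir : (-1 : ℝ) ∈ posTangentConeAt (Iic b) b :=
    mem_posTangentConeAt_of_segment_subset (by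
      rw [segment_symm, segment_eq_Icc (by linarith)]
      exact Icc_subset_Iic_self)
  simpa using hloc.hasFDerivWithinAt_nonpos hf.hasDerivAt.hasFDerivAt.hasFDerivWithinAt hdir

/-- If `φ''(x) > 0` the second derivative test makes `x` also a local minimum, so `φ` is locally
constant and `φ''(x) = 0`. -/
lemma IsLocalMax.deriv_deriv_nonpos {φ : ℝ → ℝ} {x : ℝ} (h : IsLocalMax φ x)
    (hc : ContinuousAt φ x) : deriv (deriv φ) x ≤ 0 := by
  by_contra! hpos
  have hmin : IsLocalMin φ x := isLocalMin_of_deriv_deriv_pos hpos h.deriv_eq_zero hc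
  have hconst : φ =ᶠ[𝓝 x] fun _ => φ x := (hmin.and h).mono fun y hy => le_antisymm hy.2 hy.1
  have hderiv : deriv φ =ᶠ[𝓝 x] fun _ => 0 :=
    hconst.eventuallyEq_nhds.mono fun y hy => by rw [hy.deriv_eq, deriv_const]
  rw [hderiv.deriv_eq, deriv_const] at hpos
  exact lt_irrefl _ hpos

section SecondDerivative

variable {E F : Type*} [NormedAddCommGroup E] [NormedSpace ℝ E] [NormedAddCommGroup F]
  [NormedSpace ℝ F]

lemma ContDiffAt.differentiableAt_fderiv {f : E → F} {x : E} (hf : ContDiffAt ℝ 2 f x) :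
    DifferentiableAt ℝ (fderiv ℝ f) x :=
  (hf.fderiv_right (m := 1) (by norm_num)).differentiableAt one_ne_zero

lemma hasDerivAt_deriv_comp_line {h : E → F} {x : E} (hh : ContDiffAt ℝ 2 h x) (ξ : E) :
    HasDerivAt (deriv fun s : ℝ => h (x + s • ξ)) (fderiv ℝ (fderiv ℝ h) x ξ ξ) 0 := by
  have hline : ∀ s : ℝ, HasDerivAt (fun s : ℝ => x + s • ξ) ξ s := fun s => by
    simpa using ((hasDerivAt_id s).smul_const ξ).const_add x
  have hnear : Tendsto (fun s : ℝ => x + s • ξ) (𝓝 0) (𝓝 x) := by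
    simpa using (hline 0).continuousAt.tendsto
  have hderiv : deriv (fun s : ℝ => h (x + s • ξ)) =ᶠ[𝓝 0] fun s => fderiv ℝ h (x + s • ξ) ξ := by
    filter_upwards [hnear.eventually (hh.eventually (by simp))] with s hs
    exact ((hs.differentiableAt two_ne_zero).hasFDerivAt.comp_hasDerivAt s (hline s)).deriv
  have hF : HasFDerivAt (fderiv ℝ h) (fderiv ℝ (fderiv ℝ h) x) (x + (0 : ℝ) • ξ) := by
    rw [zero_smul, add_zero]
    exact hh.differentiableAt_fderiv.hasFDerivAt
  have hcomp : HasDerivAt (fun s : ℝ => fderiv ℝ h (x + s • ξ)) (fderiv ℝ (fderiv ℝ h) x ξ) 0 :=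
    hF.comp_hasDerivAt 0 (hline 0)
  refine HasDerivAt.congr_of_eventuallyEq ?_ hderiv
  simpa using hcomp.clm_apply (hasDerivAt_const 0 ξ)

lemma IsLocalMax.fderiv_fderiv_apply_self_nonpos {h : E → ℝ} {x : E} (hmax : IsLocalMax h x)
    (hh : ContDiffAt ℝ 2 h x) (ξ : E) : fderiv ℝ (fderiv ℝ h) x ξ ξ ≤ 0 := by
  have hline : ContinuousAt (fun s : ℝ => x + s • ξ) 0 := by fun_prop
  have hφ : IsLocalMax (fun s : ℝ => h (x + s • ξ)) 0 := by
    have hmax' : IsLocalMax h (x + (0 : ℝ) • ξ) := by rwa [zero_smul, add_zero]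
    exact hmax'.comp_continuous (g := fun s : ℝ => x + s • ξ) hline
  rw [← (hasDerivAt_deriv_comp_line hh ξ).deriv]
  exact hφ.deriv_deriv_nonpos (hh.continuousAt.comp_of_eq hline (by simp))

lemma fderiv_fderiv_apply_self_le_of_isLocalMax_sub {f g : E → ℝ} {x : E}
    (hf : ContDiffAt ℝ 2 f x) (hg : ContDiffAt ℝ 2 g x) (hmax : IsLocalMax (fun y => f y - g y) x)
    (ξ : E) : fderiv ℝ (fderiv ℝ f) x ξ ξ ≤ fderiv ℝ (fderiv ℝ g) x ξ ξ := by
  have hsub : fderiv ℝ (fun y => f y - g y) =ᶠ[𝓝 x] fun y => fderiv ℝ f y - fderiv ℝ g y := by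
    filter_upwards [hf.eventually (by simp), hg.eventually (by simp)] with y hfy hgy
    exact fderiv_fun_sub (hfy.differentiableAt two_ne_zero) (hgy.differentiableAt two_ne_zero)
  have := hmax.fderiv_fderiv_apply_self_nonpos (hf.sub hg) ξ
  rw [hsub.fderiv_eq, fderiv_fun_sub hf.differentiableAt_fderiv hg.differentiableAt_fderiv] at this
  simpa [sub_nonpos] using this

end SecondDerivative

section Ellipticity

variable {E : Type*} [NormedAddCommGroup E] [InnerProductSpace ℝ E] [FiniteDimensional ℝ E]
  {ι ι' : Type*} [Fintype ι] [Fintype ι']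

/-- Both sums are the trace of the operator representing `B` through the inner product. -/
lemma OrthonormalBasis.sum_apply_self_eq (b : OrthonormalBasis ι ℝ E)
    (b' : OrthonormalBasis ι' ℝ E) (B : E →L[ℝ] E →L[ℝ] ℝ) :
    ∑ i, B (b i) (b i) = ∑ j, B (b' j) (b' j) := by
  let T : E →ₗ[ℝ] E :=
    { toFun := fun v => (toDual ℝ E).symm (B v)
      map_add' := by simp
      map_smul' := by simp }
  have hT : ∀ v, inner ℝ v (T v) = B v v := fun v => by
    rw [real_inner_comm]
    exact toDual_symm_apply
  simp only [← hT, ← LinearMap.trace_eq_sum_inner]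

/-- Evaluate the trace in an orthonormal basis containing `p / ‖p‖`. -/
lemma apply_self_le_norm_sq_mul_sum (b : OrthonormalBasis ι ℝ E) {B : E →L[ℝ] E →L[ℝ] ℝ}
    (hB : ∀ ξ, 0 ≤ B ξ ξ) (p : E) : B p p ≤ ‖p‖ ^ 2 * ∑ i, B (b i) (b i) := by
  rcases eq_or_ne p 0 with rfl | hp
  · simp
  set u := ‖p‖⁻¹ • p
  have hu : Orthonormal ℝ ((↑) : ({u} : Set E) → E) := by
    simp [u, norm_smul, hp]
  obtain ⟨Y, b', huY, hb'⟩ := hu.exists_orthonormalBasis_extension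
  have hpu : p = ‖p‖ • u := by simp [u, hp]
  have hle : B u u ≤ ∑ y, B (b' y) (b' y) := by
    have := Finset.single_le_sum (fun y _ => hB (b' y)) (Finset.mem_univ ⟨u, huY rfl⟩)
    simpa [hb'] using this
  have hBp : B p p = ‖p‖ ^ 2 * B u u := by
    conv_lhs => rw [hpu]
    simp [sq, mul_assoc]
  rw [b.sum_apply_self_eq b', hBp]
  gcongr

lemma sum_apply_self_sub_div_le (b : OrthonormalBasis ι ℝ E) {B B' : E →L[ℝ] E →L[ℝ] ℝ}
    (hBB' : ∀ ξ, B ξ ξ ≤ B' ξ ξ) (p : E) :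
    ∑ i, B (b i) (b i) - B p p / (1 + ‖p‖ ^ 2)
      ≤ ∑ i, B' (b i) (b i) - B' p p / (1 + ‖p‖ ^ 2) := by
  have hD : ∀ ξ, 0 ≤ (B' - B) ξ ξ := fun ξ => by simpa using hBB' ξ
  have htrace := apply_self_le_norm_sq_mul_sum b hD p
  have htrace_nonneg : 0 ≤ ∑ i, (B' - B) (b i) (b i) := Finset.sum_nonneg fun i _ => hD (b i)
  simp only [sub_apply, Finset.sum_sub_distrib] at htrace htrace_nonneg
  have hquot : (B' p p - B p p) / (1 + ‖p‖ ^ 2)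
      ≤ ∑ i, B' (b i) (b i) - ∑ i, B (b i) (b i) := by
    rw [div_le_iff₀ (by positivity)]
    nlinarith
  rw [sub_div] at hquot
  linarith

end Ellipticity

section Coordinates

variable {n : ℕ}

local notation "e" => EuclideanSpace.basisFun (Fin n) ℝ

lemma pd_eq_gradient_apply (f : EuclideanSpace ℝ (Fin n) → ℝ) (i : Fin n)
    (x : EuclideanSpace ℝ (Fin n)) : pd f i x = ∇ f x i := by
  rw [pd, gradient, ← toDual_symm_apply, EuclideanSpace.inner_single_right]
  simp

lemma gradNormSq_eq_norm_sq (f : EuclideanSpace ℝ (Fin n) → ℝ) (x : EuclideanSpace ℝ (Fin n)) :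
    gradNormSq f x = ‖∇ f x‖ ^ 2 := by
  simp [gradNormSq, EuclideanSpace.norm_sq_eq, pd_eq_gradient_apply]

lemma pd_pd_eq_fderiv_fderiv {f : EuclideanSpace ℝ (Fin n) → ℝ} {x : EuclideanSpace ℝ (Fin n)}
    (hf : DifferentiableAt ℝ (fderiv ℝ f) x) (i j : Fin n) :
    pd (pd f i) j x = fderiv ℝ (fderiv ℝ f) x (e j) (e i) := by
  rw [EuclideanSpace.basisFun_apply, EuclideanSpace.basisFun_apply]
  change fderiv ℝ (fun y => fderiv ℝ f y (EuclideanSpace.single i 1)) x _ = _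
  simp [fderiv_clm_apply hf (differentiableAt_const _)]

lemma apply_apply_eq_sum (B : EuclideanSpace ℝ (Fin n) →L[ℝ] EuclideanSpace ℝ (Fin n) →L[ℝ] ℝ)
    (p : EuclideanSpace ℝ (Fin n)) : B p p = ∑ i, ∑ j, B (e j) (e i) * p i * p j := by
  conv_lhs => rw [← (EuclideanSpace.basisFun (Fin n) ℝ).sum_repr p]
  simp [Finset.mul_sum, mul_comm, mul_left_comm]

lemma Qop_eq {f : EuclideanSpace ℝ (Fin n) → ℝ} {x : EuclideanSpace ℝ (Fin n)}
    (hf : DifferentiableAt ℝ (fderiv ℝ f) x) :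
    Qop f x = ∑ i, fderiv ℝ (fderiv ℝ f) x (e i) (e i)
      - fderiv ℝ (fderiv ℝ f) x (∇ f x) (∇ f x) / (1 + ‖∇ f x‖ ^ 2) + ‖∇ f x‖ ^ 2 := by
  simp only [Qop, pd_pd_eq_fderiv_fderiv hf, apply_apply_eq_sum _ (∇ f x), pd_eq_gradient_apply,
    gradNormSq_eq_norm_sq]

lemma Qtil_le_of_isLocalMax_sub {f g : EuclideanSpace ℝ (Fin n) → ℝ}
    {x : EuclideanSpace ℝ (Fin n)} (hf : ContDiffAt ℝ 2 f x) (hg : ContDiffAt ℝ 2 g x)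
    (hmax : IsLocalMax (fun y => f y - g y) x) : Qtil f x ≤ Qtil g x := by
  have hgrad : ∇ f x = ∇ g x := by
    have h0 := hmax.fderiv_eq_zero
    rw [fderiv_fun_sub (hf.differentiableAt two_ne_zero) (hg.differentiableAt two_ne_zero),
      sub_eq_zero] at h0
    rw [gradient, gradient, h0]
  have hQ := sum_apply_self_sub_div_le e
    (fderiv_fderiv_apply_self_le_of_isLocalMax_sub hf hg hmax) (∇ g x)
  rw [Qtil, Qtil, Qop_eq hf.differentiableAt_fderiv, Qop_eq hg.differentiableAt_fderiv,
    gradNormSq_eq_norm_sq, gradNormSq_eq_norm_sq, hgrad]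
  exact div_le_div_of_nonneg_right (by linarith) (sqrt_nonneg _)

end Coordinates

lemma deriv_sub_Qtil_lt_of_isMaxOn {n : ℕ} {w w' : EuclideanSpace ℝ (Fin n) → ℝ → ℝ}
    {U : Set (EuclideanSpace ℝ (Fin n))} (hU : IsOpen U) {x₀ : EuclideanSpace ℝ (Fin n)}
    {a t₀ ε : ℝ} (hε : 0 < ε) (hx₀ : x₀ ∈ U) (ha : a < t₀)
    (hwx : ContDiffAt ℝ 2 (fun y => w y t₀) x₀) (hw'x : ContDiffAt ℝ 2 (fun y => w' y t₀) x₀)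
    (hwt : DifferentiableAt ℝ (w x₀) t₀) (hw't : DifferentiableAt ℝ (w' x₀) t₀)
    (hmax : IsMaxOn (fun q => w q.1 q.2 - w' q.1 q.2 - ε * q.2) (U ×ˢ Ioc a t₀) (x₀, t₀)) :
    deriv (w' x₀) t₀ - Qtil (fun y => w' y t₀) x₀ < deriv (w x₀) t₀ - Qtil (fun y => w y t₀) x₀ := by
  have htime : ε ≤ deriv (w x₀) t₀ - deriv (w' x₀) t₀ := by
    have hd : HasDerivAt (fun s => w x₀ s - w' x₀ s - ε * s)
        (deriv (w x₀) t₀ - deriv (w' x₀) t₀ - ε) t₀ :=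
      (hwt.hasDerivAt.sub hw't.hasDerivAt).sub (by simpa using (hasDerivAt_id t₀).const_mul ε)
    have := deriv_nonneg_of_isMaxOn_Ioc ha hd.differentiableAt fun s hs => hmax (mk_mem_prod hx₀ hs)
    rw [hd.deriv] at this
    linarith
  have hspace : Qtil (fun y => w y t₀) x₀ ≤ Qtil (fun y => w' y t₀) x₀ := by
    refine Qtil_le_of_isLocalMax_sub hwx hw'x ?_
    filter_upwards [hU.mem_nhds hx₀] with y hy
    have : w y t₀ - w' y t₀ - ε * t₀ ≤ w x₀ t₀ - w' x₀ t₀ - ε * t₀ :=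
      hmax (mk_mem_prod hy ⟨ha, le_rfl⟩)
    linarith
  linarith

/-- parabolic comparison principle for `Q̃` on `U × (0,T]`. -/
theorem stmt16 {n : ℕ} (U : Set (EuclideanSpace ℝ (Fin n)))
    (hU : IsOpen U) (hbdd : Bornology.IsBounded U) (T : ℝ) (hT : 0 < T)
    (w w' : EuclideanSpace ℝ (Fin n) → ℝ → ℝ)
    (hwx : ∀ t ∈ Set.Ioc 0 T, ContDiffOn ℝ 2 (fun y => w y t) U)
    (hw'x : ∀ t ∈ Set.Ioc 0 T, ContDiffOn ℝ 2 (fun y => w' y t) U)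
    (hwt : ∀ x ∈ U, ∀ t ∈ Set.Ioc 0 T, DifferentiableAt ℝ (w x) t)
    (hw't : ∀ x ∈ U, ∀ t ∈ Set.Ioc 0 T, DifferentiableAt ℝ (w' x) t)
    (hwc : ContinuousOn (fun q : EuclideanSpace ℝ (Fin n) × ℝ => w q.1 q.2)
      (closure (U ×ˢ Set.Ioc 0 T)))
    (hw'c : ContinuousOn (fun q : EuclideanSpace ℝ (Fin n) × ℝ => w' q.1 q.2)
      (closure (U ×ˢ Set.Ioc 0 T)))
    (hQ : ∀ x ∈ U, ∀ t ∈ Set.Ioc 0 T,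
        deriv (w x) t - Qtil (fun y => w y t) x
          ≤ deriv (w' x) t - Qtil (fun y => w' y t) x)
    (hbdry : ∀ q ∈ closure (U ×ˢ Set.Ioc 0 T) \ U ×ˢ Set.Ioc 0 T,
        w q.1 q.2 ≤ w' q.1 q.2) :
    ∀ x ∈ U, ∀ t ∈ Set.Ioc 0 T, w x t ≤ w' x t := by
  intro x hx t ht
  refine le_of_forall_pos_le_add fun δ hδ => ?_
  have hε : 0 < δ / T := div_pos hδ hT
  have hK : IsCompact (closure (U ×ˢ Ioc 0 T)) :=
    (hbdd.prod (Metric.isBounded_Ioc 0 T)).isCompact_closure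
  obtain ⟨q, hqK, hqmax⟩ := hK.exists_isMaxOn
    (f := fun q => w q.1 q.2 - w' q.1 q.2 - δ / T * q.2) ⟨(x, t), subset_closure ⟨hx, ht⟩⟩
    ((hwc.sub hw'c).sub (continuous_const.mul continuous_snd).continuousOn)
  have hq : q ∉ U ×ˢ Ioc 0 T := by
    rintro ⟨hqU, hqT⟩
    refine (hQ q.1 hqU q.2 hqT).not_gt (deriv_sub_Qtil_lt_of_isMaxOn hU hε hqU hqT.1
      ((hwx _ hqT).contDiffAt (hU.mem_nhds hqU)) ((hw'x _ hqT).contDiffAt (hU.mem_nhds hqU))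
      (hwt _ hqU _ hqT) (hw't _ hqU _ hqT) (hqmax.on_subset ?_))
    exact (prod_mono le_rfl (Ioc_subset_Ioc_right hqT.2)).trans subset_closure
  have hq₀ : q.2 ∈ Icc 0 T := by
    simpa [closure_Ioc hT.ne] using map_mem_closure continuous_snd hqK fun p hp => hp.2
  have hxt : w x t - w' x t - δ / T * t ≤ w q.1 q.2 - w' q.1 q.2 - δ / T * q.2 :=
    hqmax (subset_closure (mk_mem_prod hx ht))
  have hbound : δ / T * t ≤ δ := by
    rw [div_mul_eq_mul_div, div_le_iff₀ hT]
    exact mul_le_mul_of_nonneg_left ht.2 hδ.le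
  linarith [hbdry q ⟨hqK, hq⟩, mul_nonneg hε.le hq₀.1]
end

section
/- Let U ⊆ ℝⁿ be bounded open and T > 0. If w, w′ ∈ C²,¹(U_T) ∩ C(closure U_T) both satisfy w_t − Q̃w = 0 and w′_t − Q̃w′ = 0 in U_T, and w ≡ w′ on the parabolic boundary Γ_T, then w ≡ w′ in U_T (uniqueness of solutions with given parabolic boundary data). -/
open Real Set

open Filter Topology Finset


lemma deriv_nonneg_of_left_max {g : ℝ → ℝ} {a t0 : ℝ} (h : a < t0)
    (hd : DifferentiableAt ℝ g t0) (hmax : ∀ t ∈ Set.Ioo a t0, g t ≤ g t0) :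
    0 ≤ deriv g t0 := by
  have H : Tendsto (slope g t0) (𝓝[<] t0) (𝓝 (deriv g t0)) :=
    (hasDerivAt_iff_tendsto_slope.1 hd.hasDerivAt).mono_left
      (nhdsWithin_mono _ (fun y hy => ne_of_lt hy))
  refine ge_of_tendsto H ?_
  filter_upwards [Ioo_mem_nhdsLT h, self_mem_nhdsWithin] with t ht ht'
  have h1 : g t - g t0 ≤ 0 := sub_nonpos.2 (hmax t ht)
  have h2 : t - t0 < 0 := sub_neg.2 ht'
  rw [slope_def_field]
  exact div_nonneg_of_nonpos h1 h2.le


lemma deriv2_nonpos_of_isLocalMax {φ : ℝ → ℝ} (hmax : IsLocalMax φ 0)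
    (hφ : ∀ᶠ s in 𝓝 (0:ℝ), DifferentiableAt ℝ φ s)
    (h2 : DifferentiableAt ℝ (deriv φ) 0) :
    deriv (deriv φ) 0 ≤ 0 := by
  by_contra hpos
  push_neg at hpos
  have hd0 : deriv φ 0 = 0 := hmax.deriv_eq_zero
  have H : Tendsto (slope (deriv φ) 0) (𝓝[>] (0:ℝ)) (𝓝 (deriv (deriv φ) 0)) :=
    (hasDerivAt_iff_tendsto_slope.1 h2.hasDerivAt).mono_left
      (nhdsWithin_mono _ (fun y hy => ne_of_gt hy))
  have Hev : ∀ᶠ s in 𝓝[>] (0:ℝ), 0 < slope (deriv φ) 0 s :=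
    H.eventually (eventually_gt_nhds hpos)
  have Hpos : ∀ᶠ s in 𝓝[>] (0:ℝ), 0 < deriv φ s := by
    filter_upwards [Hev, self_mem_nhdsWithin] with s hs hs'
    rw [slope_def_field, hd0, sub_zero, sub_zero] at hs
    have := mul_pos hs hs'
    rwa [div_mul_cancel₀ _ (ne_of_gt hs')] at this
  obtain ⟨b, hb, hIoo⟩ := ((nhdsGT_basis (0:ℝ)).eventually_iff).1 Hpos
  obtain ⟨d1, hd1, hball⟩ := Metric.eventually_nhds_iff.1 (hφ.and hmax)
  set δ := min b d1 / 2 with hδdef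
  have hδpos : 0 < δ := by positivity
  have hδb : δ < b := by
    have := min_le_left b d1; rw [hδdef]; linarith
  have hδd1 : δ < d1 := by
    have := min_le_right b d1; rw [hδdef]; linarith
  have hcont : ContinuousOn φ (Icc 0 δ) := by
    intro s hs
    have : DifferentiableAt ℝ φ s := by
      refine (hball ?_).1
      rw [Real.dist_eq]
      rcases hs with ⟨h0, h1⟩
      rw [sub_zero, abs_of_nonneg h0]; linarith
    exact this.continuousAt.continuousWithinAt
  have hmono : StrictMonoOn φ (Icc 0 δ) := by
    refine strictMonoOn_of_deriv_pos (convex_Icc _ _) hcont ?_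
    intro s hs
    rw [interior_Icc] at hs
    exact hIoo ⟨hs.1, lt_trans hs.2 hδb⟩
  have : φ 0 < φ δ := hmono ⟨le_rfl, hδpos.le⟩ ⟨hδpos.le, le_rfl⟩ hδpos
  have : φ δ ≤ φ 0 := by
    refine (hball ?_).2
    rw [Real.dist_eq, sub_zero, abs_of_nonneg hδpos.le]; exact hδd1
  linarith


lemma qform_eval {n : ℕ} (C : Fin n → Fin n → ℝ) (s t : ℝ) (i j : Fin n) :
    ∑ k, ∑ l, C k l * (s * (Pi.single i 1 : Fin n → ℝ) k + t * (Pi.single j 1 : Fin n → ℝ) k)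
        * (s * (Pi.single i 1 : Fin n → ℝ) l + t * (Pi.single j 1 : Fin n → ℝ) l)
      = s*s*C i i + s*t*C i j + t*s*C j i + t*t*C j j := by
  simp only [Pi.single_apply, mul_ite, ite_mul, mul_one, mul_zero, zero_mul, one_mul,
    mul_add, add_mul, Finset.sum_add_distrib, Finset.sum_ite_eq', Finset.mem_univ, if_true]
  ring

lemma matrix_ineq {n : ℕ} (h : Fin n → Fin n → ℝ) (p : Fin n → ℝ)
    (hsymm : ∀ i j, h i j = h j i)
    (hneg : ∀ z : Fin n → ℝ, ∑ i, ∑ j, h i j * z i * z j ≤ 0) :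
    (∑ i, h i i) - (∑ i, ∑ j, h i j * p i * p j) / (1 + ∑ i, (p i)^2) ≤ 0 := by
  set C : Fin n → Fin n → ℝ := fun i j => -(h i j) with hC
  have hCpos : ∀ z : Fin n → ℝ, 0 ≤ ∑ i, ∑ j, C i j * z i * z j := by
    intro z
    have := hneg z
    have e : ∑ i, ∑ j, C i j * z i * z j = -(∑ i, ∑ j, h i j * z i * z j) := by
      simp [hC, neg_mul, Finset.sum_neg_distrib]
    rw [e]; linarith
  have hdiag : ∀ i, 0 ≤ C i i := by
    intro i
    have := hCpos (fun k => 1 * (Pi.single i 1 : Fin n → ℝ) k + 0 * (Pi.single i 1 : Fin n → ℝ) k)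
    rw [qform_eval] at this
    linarith
  have hentry : ∀ i j, (C i j)^2 ≤ C i i * C j j := by
    intro i j
    have hq : ∀ t : ℝ, 0 ≤ C i i * (t * t) + (C i j + C j i) * t + C j j := by
      intro t
      have := hCpos (fun k => t * (Pi.single i 1 : Fin n → ℝ) k + 1 * (Pi.single j 1 : Fin n → ℝ) k)
      rw [qform_eval] at this
      linarith
    have hd := discrim_le_zero hq
    rw [discrim] at hd
    have hs : C i j = C j i := by simp [hC, hsymm i j]
    rw [← hs] at hd
    nlinarith [hd]
  have habs : ∀ i j, |C i j| ≤ Real.sqrt (C i i) * Real.sqrt (C j j) := by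
    intro i j
    rw [← Real.sqrt_sq_eq_abs, ← Real.sqrt_mul (hdiag i)]
    exact Real.sqrt_le_sqrt (hentry i j)
  have key : ∑ i, ∑ j, C i j * p i * p j ≤ (∑ i, C i i) * (∑ i, (p i)^2) := by
    calc ∑ i, ∑ j, C i j * p i * p j
        ≤ ∑ i, ∑ j, (Real.sqrt (C i i) * |p i|) * (Real.sqrt (C j j) * |p j|) := by
          refine Finset.sum_le_sum fun i _ => Finset.sum_le_sum fun j _ => ?_
          calc C i j * p i * p j ≤ |C i j * p i * p j| := le_abs_self _
            _ = |C i j| * |p i| * |p j| := by rw [abs_mul, abs_mul]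
            _ ≤ (Real.sqrt (C i i) * Real.sqrt (C j j)) * |p i| * |p j| := by
                exact mul_le_mul_of_nonneg_right
                  (mul_le_mul_of_nonneg_right (habs i j) (abs_nonneg _)) (abs_nonneg _)
            _ = (Real.sqrt (C i i) * |p i|) * (Real.sqrt (C j j) * |p j|) := by ring
      _ = (∑ i, Real.sqrt (C i i) * |p i|) * (∑ j, Real.sqrt (C j j) * |p j|) := by
          rw [Finset.sum_mul_sum]
      _ = (∑ i, Real.sqrt (C i i) * |p i|)^2 := by rw [sq]
      _ ≤ (∑ i, C i i) * (∑ i, (p i)^2) := by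
          refine Finset.sum_sq_le_sum_mul_sum_of_sq_eq_mul _ (fun i _ => hdiag i)
            (fun i _ => sq_nonneg _) (fun i _ => ?_)
          rw [mul_pow, Real.sq_sqrt (hdiag i), sq_abs]
  -- conclude
  have hG : (0:ℝ) ≤ ∑ i, (p i)^2 := Finset.sum_nonneg fun i _ => sq_nonneg _
  have hGpos : (0:ℝ) < 1 + ∑ i, (p i)^2 := by linarith
  have hCdiag : (0:ℝ) ≤ ∑ i, C i i := Finset.sum_nonneg fun i _ => hdiag i
  have e1 : ∑ i, h i i = -(∑ i, C i i) := by simp [hC]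
  have e2 : ∑ i, ∑ j, h i j * p i * p j = -(∑ i, ∑ j, C i j * p i * p j) := by
    simp [hC, neg_mul, Finset.sum_neg_distrib]
  rw [e1, e2, sub_nonpos, neg_div, neg_le_neg_iff, div_le_iff₀ hGpos]
  nlinarith

lemma hessian_nonpos {n : ℕ} {d : EuclideanSpace ℝ (Fin n) → ℝ}
    {x0 : EuclideanSpace ℝ (Fin n)} {r : ℝ}
    (hr : 0 < r) (hd : ContDiffOn ℝ 2 d (Metric.ball x0 r))
    (hmax : ∀ y ∈ Metric.ball x0 r, d y ≤ d x0)
    (v : EuclideanSpace ℝ (Fin n)) :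
    fderiv ℝ (fderiv ℝ d) x0 v v ≤ 0 := by
  set ρ := r / (‖v‖ + 1) with hρdef
  have hv1 : (0:ℝ) < ‖v‖ + 1 := by positivity
  have hρ : 0 < ρ := div_pos hr hv1
  have hline : ∀ s : ℝ, |s| < ρ → x0 + s • v ∈ Metric.ball x0 r := by
    intro s hs
    rw [Metric.mem_ball, dist_eq_norm, add_sub_cancel_left, norm_smul, Real.norm_eq_abs]
    calc |s| * ‖v‖ ≤ |s| * (‖v‖ + 1) := by nlinarith [abs_nonneg s, norm_nonneg v]
      _ < ρ * (‖v‖ + 1) := by nlinarith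
      _ = r := by rw [hρdef]; field_simp
  set φ : ℝ → ℝ := fun s => d (x0 + s • v) with hφdef
  have hφd : ∀ s : ℝ, |s| < ρ → HasDerivAt φ (fderiv ℝ d (x0 + s • v) v) s := by
    intro s hs
    have hL : HasDerivAt (fun s : ℝ => x0 + s • v) v s := by
      simpa using ((hasDerivAt_id s).smul_const v).const_add x0
    have hD : DifferentiableAt ℝ d (x0 + s • v) :=
      (hd.contDiffAt (Metric.isOpen_ball.mem_nhds (hline s hs))).differentiableAt (by norm_num)
    exact hD.hasFDerivAt.comp_hasDerivAt s hL
  set A := fderiv ℝ (fderiv ℝ d) x0 with hAdef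
  have hA : HasFDerivAt (fderiv ℝ d) A x0 :=
    (((hd.contDiffAt (Metric.isOpen_ball.mem_nhds (Metric.mem_ball_self hr))).fderiv_right
      (m := 1) (by norm_num)).differentiableAt one_ne_zero).hasFDerivAt
  set ev := ContinuousLinearMap.apply ℝ ℝ v with hevdef
  have hψ : HasDerivAt (fun s : ℝ => fderiv ℝ d (x0 + s • v) v) (A v v) 0 := by
    have hL : HasDerivAt (fun s : ℝ => x0 + s • v) v 0 := by
      simpa using ((hasDerivAt_id (0:ℝ)).smul_const v).const_add x0
    have h1 : HasFDerivAt (fun y => fderiv ℝ d y v) (ev.comp A) x0 := by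
      exact (ev.hasFDerivAt).comp x0 hA
    have h2 : HasFDerivAt (fun y => fderiv ℝ d y v) (ev.comp A) (x0 + (0:ℝ) • v) := by
      simpa using h1
    exact h2.comp_hasDerivAt 0 hL
  have hev : ∀ᶠ s in 𝓝 (0:ℝ), deriv φ s = fderiv ℝ d (x0 + s • v) v := by
    filter_upwards [Metric.ball_mem_nhds (0:ℝ) hρ] with s hs
    rw [mem_ball_zero_iff, Real.norm_eq_abs] at hs
    exact (hφd s hs).deriv
  have hev' : deriv φ =ᶠ[𝓝 (0:ℝ)] fun s => fderiv ℝ d (x0 + s • v) v := hev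
  have hkey : deriv (deriv φ) 0 = A v v := by
    rw [hev'.deriv_eq, hψ.deriv]
  rw [← hkey]
  apply deriv2_nonpos_of_isLocalMax
  · filter_upwards [Metric.ball_mem_nhds (0:ℝ) hρ] with s hs
    rw [mem_ball_zero_iff, Real.norm_eq_abs] at hs
    have : d (x0 + s • v) ≤ d x0 := hmax _ (hline s hs)
    simpa [hφdef] using this
  · filter_upwards [Metric.ball_mem_nhds (0:ℝ) hρ] with s hs
    rw [mem_ball_zero_iff, Real.norm_eq_abs] at hs
    exact (hφd s hs).differentiableAt
  · rw [hev'.differentiableAt_iff]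
    exact hψ.differentiableAt

lemma key_onesided {n : ℕ} (U : Set (EuclideanSpace ℝ (Fin n)))
    (hU : IsOpen U) (hbdd : Bornology.IsBounded U) (T : ℝ) (hT : 0 < T)
    (w w' : EuclideanSpace ℝ (Fin n) → ℝ → ℝ)
    (hwx : ∀ t ∈ Set.Ioc 0 T, ContDiffOn ℝ 2 (fun y => w y t) U)
    (hw'x : ∀ t ∈ Set.Ioc 0 T, ContDiffOn ℝ 2 (fun y => w' y t) U)
    (hwt : ∀ x ∈ U, ∀ t ∈ Set.Ioc 0 T, DifferentiableAt ℝ (w x) t)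
    (hw't : ∀ x ∈ U, ∀ t ∈ Set.Ioc 0 T, DifferentiableAt ℝ (w' x) t)
    (hwc : ContinuousOn (fun q : EuclideanSpace ℝ (Fin n) × ℝ => w q.1 q.2)
      (closure (U ×ˢ Set.Ioc 0 T)))
    (hw'c : ContinuousOn (fun q : EuclideanSpace ℝ (Fin n) × ℝ => w' q.1 q.2)
      (closure (U ×ˢ Set.Ioc 0 T)))
    (hsol : ∀ x ∈ U, ∀ t ∈ Set.Ioc 0 T,
        deriv (w x) t - Qtil (fun y => w y t) x = 0)
    (hsol' : ∀ x ∈ U, ∀ t ∈ Set.Ioc 0 T,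
        deriv (w' x) t - Qtil (fun y => w' y t) x = 0)
    (hbdry : ∀ q ∈ closure (U ×ˢ Set.Ioc 0 T) \ U ×ˢ Set.Ioc 0 T,
        w q.1 q.2 = w' q.1 q.2) :
    ∀ x ∈ U, ∀ t ∈ Set.Ioc 0 T, w x t ≤ w' x t := by
  intro x hx t ht
  have main : ∀ ε : ℝ, 0 < ε → w x t - w' x t ≤ ε * t := by
    intro ε hε
    set S := U ×ˢ Set.Ioc 0 T with hSdef
    set K := closure S with hKdef
    set V : EuclideanSpace ℝ (Fin n) × ℝ → ℝ :=
      fun q => w q.1 q.2 - w' q.1 q.2 - ε * q.2 with hVdef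
    have hVc : ContinuousOn V K :=
      (hwc.sub hw'c).sub ((continuous_const.mul continuous_snd).continuousOn)
    have hKco : IsCompact K :=
      (hbdd.prod (Metric.isBounded_Ioc 0 T)).isCompact_closure
    have hxtS : (x, t) ∈ S := ⟨hx, ht⟩
    have hne : K.Nonempty := ⟨(x, t), subset_closure hxtS⟩
    obtain ⟨q0, hq0K, hq0max⟩ := hKco.exists_isMaxOn hne hVc
    obtain ⟨x0, t0⟩ := q0
    have hVq0 : V (x0, t0) ≤ 0 := by
      by_cases hq0 : (x0, t0) ∈ S
      · exfalso
        obtain ⟨hx0, ht0⟩ := hq0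
        -- time part
        set g : ℝ → ℝ := fun s => w x0 s - w' x0 s - ε * s with hgdef
        have hwd := (hwt x0 hx0 t0 ht0).hasDerivAt
        have hw'd := (hw't x0 hx0 t0 ht0).hasDerivAt
        have hεd : HasDerivAt (fun s : ℝ => ε * s) ε t0 := by
          simpa using (hasDerivAt_id t0).const_mul ε
        have hgD : HasDerivAt g (deriv (w x0) t0 - deriv (w' x0) t0 - ε) t0 :=
          (hwd.sub hw'd).sub hεd
        have hgmax : ∀ s ∈ Set.Ioo 0 t0, g s ≤ g t0 := by
          intro s hs
          have hsS : (x0, s) ∈ S := ⟨hx0, hs.1, le_trans hs.2.le ht0.2⟩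
          have h2 : V (x0, s) ≤ V (x0, t0) := hq0max (subset_closure hsS)
          simp only [hVdef] at h2
          simpa [hgdef] using h2
        have h1 : 0 ≤ deriv g t0 :=
          deriv_nonneg_of_left_max ht0.1 hgD.differentiableAt hgmax
        rw [hgD.deriv] at h1
        have hsolx := hsol x0 hx0 t0 ht0
        have hsol'x := hsol' x0 hx0 t0 ht0
        have hQ : ε ≤ Qtil (fun y => w y t0) x0 - Qtil (fun y => w' y t0) x0 := by
          have e1 : deriv (w x0) t0 = Qtil (fun y => w y t0) x0 := by linarith
          have e2 : deriv (w' x0) t0 = Qtil (fun y => w' y t0) x0 := by linarith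
          linarith
        -- space part
        set f : EuclideanSpace ℝ (Fin n) → ℝ := fun y => w y t0 with hfdef
        set f' : EuclideanSpace ℝ (Fin n) → ℝ := fun y => w' y t0 with hf'def
        set d : EuclideanSpace ℝ (Fin n) → ℝ := fun y => f y - f' y with hddef
        obtain ⟨r, hrpos, hrU⟩ := Metric.isOpen_iff.1 hU x0 hx0
        have hfC2U : ContDiffOn ℝ 2 f U := hwx t0 ht0
        have hf'C2U : ContDiffOn ℝ 2 f' U := hw'x t0 ht0
        have hdC2 : ContDiffOn ℝ 2 d (Metric.ball x0 r) :=
          (hfC2U.mono hrU).sub (hf'C2U.mono hrU)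
        have hdmax : ∀ y ∈ Metric.ball x0 r, d y ≤ d x0 := by
          intro y hy
          have hyS : (y, t0) ∈ S := ⟨hrU hy, ht0⟩
          have h2 : V (y, t0) ≤ V (x0, t0) := hq0max (subset_closure hyS)
          simp only [hVdef] at h2
          simp only [hddef, hfdef, hf'def]
          linarith
        have hfC2 : ContDiffAt ℝ 2 f x0 := hfC2U.contDiffAt (hU.mem_nhds hx0)
        have hf'C2 : ContDiffAt ℝ 2 f' x0 := hf'C2U.contDiffAt (hU.mem_nhds hx0)
        have hfd : DifferentiableAt ℝ f x0 := hfC2.differentiableAt (by norm_num)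
        have hf'd : DifferentiableAt ℝ f' x0 := hf'C2.differentiableAt (by norm_num)
        -- first derivative vanishes
        have hdlocmax : IsLocalMax d x0 := by
          filter_upwards [Metric.ball_mem_nhds x0 hrpos] with y hy
          exact hdmax y hy
        have hdf0 : fderiv ℝ d x0 = 0 := hdlocmax.fderiv_eq_zero
        have hfsub : fderiv ℝ d x0 = fderiv ℝ f x0 - fderiv ℝ f' x0 := fderiv_sub hfd hf'd
        have hp : ∀ i, pd f i x0 = pd f' i x0 := by
          intro i
          have : (fderiv ℝ f x0 - fderiv ℝ f' x0) (EuclideanSpace.single i 1) = 0 := by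
            rw [← hfsub, hdf0]; rfl
          simp only [ContinuousLinearMap.sub_apply] at this
          simp only [pd]
          linarith
        have hG : gradNormSq f' x0 = gradNormSq f x0 := by
          unfold gradNormSq
          exact Finset.sum_congr rfl fun i _ => by rw [hp i]
        -- second derivatives
        have hpdfd : ∀ i : Fin n, DifferentiableAt ℝ (pd f i) x0 := by
          intro i
          have h1 : DifferentiableAt ℝ (fderiv ℝ f) x0 :=
            (hfC2.fderiv_right (m := 1) (by norm_num)).differentiableAt one_ne_zero
          exact h1.clm_apply (differentiableAt_const _)
        have hpdf'd : ∀ i : Fin n, DifferentiableAt ℝ (pd f' i) x0 := by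
          intro i
          have h1 : DifferentiableAt ℝ (fderiv ℝ f') x0 :=
            (hf'C2.fderiv_right (m := 1) (by norm_num)).differentiableAt one_ne_zero
          exact h1.clm_apply (differentiableAt_const _)
        have h2nd : ∀ i j : Fin n,
            pd (pd d i) j x0 = pd (pd f i) j x0 - pd (pd f' i) j x0 := by
          intro i j
          have heq : (pd d i) =ᶠ[𝓝 x0] fun y => pd f i y - pd f' i y := by
            filter_upwards [hU.mem_nhds hx0] with y hy
            have hfy : DifferentiableAt ℝ f y := (hfC2U.contDiffAt (hU.mem_nhds hy)).differentiableAt (by norm_num)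
            have hf'y : DifferentiableAt ℝ f' y := (hf'C2U.contDiffAt (hU.mem_nhds hy)).differentiableAt (by norm_num)
            simp only [pd, hddef]
            rw [fderiv_fun_sub hfy hf'y]
            rfl
          have : fderiv ℝ (pd d i) x0 = fderiv ℝ (fun y => pd f i y - pd f' i y) x0 :=
            heq.fderiv_eq
          simp only [pd]
          rw [this, fderiv_fun_sub (hpdfd i) (hpdf'd i)]
          simp
        -- Hessian of d
        set A := fderiv ℝ (fderiv ℝ d) x0 with hAdef
        have hdC2at : ContDiffAt ℝ 2 d x0 :=
          hdC2.contDiffAt (Metric.isOpen_ball.mem_nhds (Metric.mem_ball_self hrpos))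
        have hdfdiff : DifferentiableAt ℝ (fderiv ℝ d) x0 :=
          (hdC2at.fderiv_right (m := 1) (by norm_num)).differentiableAt one_ne_zero
        have hdA : ∀ i j : Fin n, pd (pd d i) j x0
            = A (EuclideanSpace.single j 1) (EuclideanSpace.single i 1) := by
          intro i j
          have hpdi : pd d i = fun y => (fderiv ℝ d y) (EuclideanSpace.single i 1) := rfl
          simp only [pd]
          rw [hpdi, fderiv_clm_apply hdfdiff (differentiableAt_const _)]
          simp
          rfl
        have hsymmA : ∀ u v : EuclideanSpace ℝ (Fin n), A u v = A v u := by
          intro u v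
          exact (hdC2at.isSymmSndFDerivAt (by simp [minSmoothness_of_isRCLikeNormedField])) u v
        have hquad : ∀ z : Fin n → ℝ,
            ∑ i, ∑ j, pd (pd d i) j x0 * z i * z j ≤ 0 := by
          intro z
          set zz : EuclideanSpace ℝ (Fin n) := ∑ k, z k • EuclideanSpace.single k 1 with hzz
          have hAz : A zz zz = ∑ j, ∑ i, A (EuclideanSpace.single j 1) (EuclideanSpace.single i 1) * z i * z j := by
            have h2 : A zz = ∑ j, z j • A (EuclideanSpace.single j 1) := by
              rw [hzz, map_sum]
              exact Finset.sum_congr rfl fun j _ => by rw [map_smul]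
            rw [h2, ContinuousLinearMap.sum_apply]
            refine Finset.sum_congr rfl fun j _ => ?_
            rw [ContinuousLinearMap.smul_apply, smul_eq_mul]
            have h1 : A (EuclideanSpace.single j 1) zz
                = ∑ i, z i * A (EuclideanSpace.single j 1) (EuclideanSpace.single i 1) := by
              rw [hzz, map_sum]
              exact Finset.sum_congr rfl fun i _ => by rw [map_smul, smul_eq_mul]
            rw [h1, Finset.mul_sum]
            exact Finset.sum_congr rfl fun i _ => by ring
          have hle : A zz zz ≤ 0 := hessian_nonpos hrpos hdC2 hdmax zz
          calc ∑ i, ∑ j, pd (pd d i) j x0 * z i * z j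
              = ∑ j, ∑ i, pd (pd d i) j x0 * z i * z j := Finset.sum_comm
            _ = A zz zz := by
                rw [hAz]
                exact Finset.sum_congr rfl fun j _ => Finset.sum_congr rfl fun i _ => by
                  rw [hdA i j]
            _ ≤ 0 := hle
        -- assemble
        set hm : Fin n → Fin n → ℝ := fun i j => pd (pd d i) j x0 with hhm
        set p : Fin n → ℝ := fun i => pd f i x0 with hpdef
        have hsymm : ∀ i j, hm i j = hm j i := by
          intro i j
          simp only [hhm]
          rw [hdA i j, hdA j i, hsymmA]
        have hM := matrix_ineq hm p hsymm hquad
        have hGsum : gradNormSq f x0 = ∑ i, (p i)^2 := rfl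
        have hGpos : (0:ℝ) < 1 + gradNormSq f x0 := by
          have : (0:ℝ) ≤ gradNormSq f x0 := Finset.sum_nonneg fun i _ => sq_nonneg _
          linarith
        have hsq : (0:ℝ) < Real.sqrt (1 + gradNormSq f x0) := Real.sqrt_pos.2 hGpos
        have hQdiff : Qtil f x0 - Qtil f' x0
            = ((∑ i, hm i i) - (∑ i, ∑ j, hm i j * p i * p j) / (1 + gradNormSq f x0))
              / Real.sqrt (1 + gradNormSq f x0) := by
          unfold Qtil Qop
          rw [hG]
          rw [div_sub_div_same]
          congr 1
          have e1 : ∑ i, pd (pd f i) i x0 - ∑ i, pd (pd f' i) i x0 = ∑ i, hm i i := by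
            rw [← Finset.sum_sub_distrib]
            exact Finset.sum_congr rfl fun i _ => (h2nd i i).symm
          have e2 : (∑ i, ∑ j, pd (pd f i) j x0 * pd f i x0 * pd f j x0)
              - ∑ i, ∑ j, pd (pd f' i) j x0 * pd f' i x0 * pd f' j x0
              = ∑ i, ∑ j, hm i j * p i * p j := by
            rw [← Finset.sum_sub_distrib]
            refine Finset.sum_congr rfl fun i _ => ?_
            rw [← Finset.sum_sub_distrib]
            refine Finset.sum_congr rfl fun j _ => ?_
            simp only [hhm, hpdef]
            rw [h2nd i j, ← hp i, ← hp j]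
            ring
          rw [← e1, ← e2]
          rw [sub_div]
          ring
        rw [hQdiff] at hQ
        rw [hGsum] at hQ
        have : ((∑ i, hm i i) - (∑ i, ∑ j, hm i j * p i * p j) / (1 + ∑ i, (p i)^2))
            / Real.sqrt (1 + ∑ i, (p i)^2) ≤ 0 := by
          apply div_nonpos_of_nonpos_of_nonneg hM (Real.sqrt_nonneg _)
        rw [hGsum] at hsq
        linarith
      · -- boundary case
        have hb := hbdry (x0, t0) ⟨hq0K, hq0⟩
        have ht0 : 0 ≤ t0 := by
          have hsub : K ⊆ closure U ×ˢ closure (Set.Ioc 0 T) := by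
            rw [hKdef, hSdef, closure_prod_eq]
          have h2 := (hsub hq0K).2
          rw [closure_Ioc hT.ne] at h2
          exact h2.1
        simp only [hVdef]
        simp only at hb
        rw [hb]
        nlinarith
    have h3 : V (x, t) ≤ V (x0, t0) := hq0max (subset_closure hxtS)
    simp only [hVdef] at h3 hVq0
    linarith
  by_contra hlt
  push_neg at hlt
  have hpos : 0 < w x t - w' x t := by linarith
  have htpos : 0 < t := ht.1
  have hmn := main ((w x t - w' x t) / (2 * t)) (by positivity)
  have h2 : (w x t - w' x t) / (2 * t) * t = (w x t - w' x t) / 2 := by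
    field_simp
  rw [h2] at hmn
  linarith

/-- uniqueness for the transformed relativistic heat equation
with given parabolic boundary data. -/
theorem stmt18 {n : ℕ} (U : Set (EuclideanSpace ℝ (Fin n)))
    (hU : IsOpen U) (hbdd : Bornology.IsBounded U) (T : ℝ) (hT : 0 < T)
    (w w' : EuclideanSpace ℝ (Fin n) → ℝ → ℝ)
    (hwx : ∀ t ∈ Set.Ioc 0 T, ContDiffOn ℝ 2 (fun y => w y t) U)
    (hw'x : ∀ t ∈ Set.Ioc 0 T, ContDiffOn ℝ 2 (fun y => w' y t) U)
    (hwt : ∀ x ∈ U, ∀ t ∈ Set.Ioc 0 T, DifferentiableAt ℝ (w x) t)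
    (hw't : ∀ x ∈ U, ∀ t ∈ Set.Ioc 0 T, DifferentiableAt ℝ (w' x) t)
    (hwc : ContinuousOn (fun q : EuclideanSpace ℝ (Fin n) × ℝ => w q.1 q.2)
      (closure (U ×ˢ Set.Ioc 0 T)))
    (hw'c : ContinuousOn (fun q : EuclideanSpace ℝ (Fin n) × ℝ => w' q.1 q.2)
      (closure (U ×ˢ Set.Ioc 0 T)))
    (hsol : ∀ x ∈ U, ∀ t ∈ Set.Ioc 0 T,
        deriv (w x) t - Qtil (fun y => w y t) x = 0)
    (hsol' : ∀ x ∈ U, ∀ t ∈ Set.Ioc 0 T,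
        deriv (w' x) t - Qtil (fun y => w' y t) x = 0)
    (hbdry : ∀ q ∈ closure (U ×ˢ Set.Ioc 0 T) \ U ×ˢ Set.Ioc 0 T,
        w q.1 q.2 = w' q.1 q.2) :
    ∀ x ∈ U, ∀ t ∈ Set.Ioc 0 T, w x t = w' x t := by
  intro x hx t ht
  have h1 := key_onesided U hU hbdd T hT w w' hwx hw'x hwt hw't hwc hw'c hsol hsol'
    hbdry x hx t ht
  have h2 := key_onesided U hU hbdd T hT w' w hw'x hwx hw't hwt hw'c hwc hsol' hsol
    (fun q hq => (hbdry q hq).symm) x hx t ht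
  linarith
end
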